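/- arXiv:0907.5322 — 6 statements merged into one kernel-verified Lean document; each statement's English description precedes it below -/
import Mathlib

section
/- Let E, F, G be real separable Hilbert spaces. Let (λ_n)_{n∈ℕ} and λ be Borel probability measures on E that are uniformly discretized with exponential weights. Let A and A_k (k ∈ ℕ) be bounded linear operators from E to F with sup_k ‖A_k‖ < ∞ and ‖A_k u − A u‖_F → 0 for every u ∈ E, and let m_k → m in F. Let B : F × F → ℝ be a continuous bilinear form, and define Ξ_k(u) = exp(−½‖A_k u‖²_F + B(A_k u, m_k)) and Ξ(u) = exp(−½‖A u‖²_F + B(A u, m)). Let g : E → G be continuous with ‖g(u)‖_G ≤ C exp(C‖u‖_E) for all u ∈ E and some constant C > 0. Then, as k and n tend to infinity jointly (i.e. along the product filter atTop × atTop), the ratio of Bochner integrals (∫_E g(u) Ξ_k(u) dλ_n(u)) / (∫_E Ξ_k(u) dλ_n(u)) converges in G to (∫_E g(u) Ξ(u) dλ(u)) / (∫_E Ξ(u) dλ(u)). -/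
/-!
Weak convergence on a Polish space makes `{μₙ} ∪ {μ}` tight (Prokhorov). Since `Aₖ → A`
strongly with bounded norms, `Ξₖ(u') → Ξ(u)` as `k → ∞` and `u' → u` jointly, hence uniformly
on compact sets. Numerator and denominator are integrals of continuous integrands of at most
exponential growth: cutting them off at radius `R` costs `O(e^{-R})` uniformly in `k` and `n` by
the uniform exponential moments, and the truncated, bounded integrals converge jointly by
tightness, uniform convergence on compacts and weak convergence. Weak convergence against a
bounded continuous `G`-valued `h` reduces to the scalar case by projecting onto the span of a
finite net of `h(K)`, `K` a compact set carrying all but `δ` of every measure. Finally the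
limiting denominator is positive because `Ξ > 0`.
-/

open MeasureTheory Filter Real
open scoped ENNReal Topology InnerProductSpace BoundedContinuousFunction

lemma Filter.Tendsto.of_forall_dist_le {ι X : Type*} [PseudoMetricSpace X] {l : Filter ι}
    {x : ι → X} {a : X}
    (h : ∀ ε > 0, ∃ (y : ι → X) (b : X), Tendsto y l (𝓝 b) ∧
      (∀ᶠ i in l, dist (x i) (y i) ≤ ε) ∧ dist b a ≤ ε) :
    Tendsto x l (𝓝 a) := by
  refine Metric.tendsto_nhds.2 fun ε hε => ?_
  obtain ⟨y, b, hy, hxy, hba⟩ := h (ε / 3) (by positivity)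
  filter_upwards [hxy, Metric.tendsto_nhds.1 hy (ε / 3) (by positivity)] with i hi hyi
  calc dist (x i) a ≤ dist (x i) (y i) + dist (y i) b + dist b a := dist_triangle4 _ _ _ _
    _ < ε := by linarith

lemma TendstoLocallyUniformly.of_tendsto_uncurry {ι α β : Type*} [TopologicalSpace α]
    [UniformSpace β] {F : ι → α → β} {f : α → β} {l : Filter ι} (hf : Continuous f)
    (h : ∀ x, Tendsto (Function.uncurry F) (l ×ˢ 𝓝 x) (𝓝 (f x))) :
    TendstoLocallyUniformly F f l :=
  tendstoLocallyUniformly_iff_forall_tendsto.2 fun x =>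
    (((hf.tendsto x).comp tendsto_snd).prodMk_nhds (h x)).mono_right (nhds_le_uniformity (f x))

lemma norm_integral_le_add_mul_measureReal_compl {α G : Type*} [MeasurableSpace α]
    [NormedAddCommGroup G] [NormedSpace ℝ G] {ν : Measure α} [IsProbabilityMeasure ν]
    {f : α → G} {K : Set α} (hK : MeasurableSet K) {a M : ℝ} (ha : 0 ≤ a)
    (hfK : ∀ u ∈ K, ‖f u‖ ≤ a) (hf : ∀ u, ‖f u‖ ≤ M) :
    ‖∫ u, f u ∂ν‖ ≤ a + M * ν.real Kᶜ := by
  have hbound : ∀ u, ‖f u‖ ≤ a + Kᶜ.indicator (fun _ => M) u := by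
    intro u
    by_cases hu : u ∈ K
    · simpa [hu] using hfK u hu
    · simpa [hu] using (hf u).trans (le_add_of_nonneg_left ha)
  calc ‖∫ u, f u ∂ν‖ ≤ ∫ u, a + Kᶜ.indicator (fun _ => M) u ∂ν :=
        norm_integral_le_of_norm_le ((integrable_const a).add
          ((integrable_const M).indicator hK.compl)) (ae_of_all _ hbound)
    _ = a + M * ν.real Kᶜ := by
        rw [integral_add (integrable_const a) ((integrable_const M).indicator hK.compl),
          integral_indicator_const M hK.compl]
        simp [mul_comm]

lemma Submodule.norm_sub_starProjection_le {G : Type*} [NormedAddCommGroup G]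
    [InnerProductSpace ℝ G] (V : Submodule ℝ G) [V.HasOrthogonalProjection]
    {x : G} (hx : x ∈ V) (y : G) : ‖y - V.starProjection y‖ ≤ ‖y - x‖ := by
  rw [starProjection_minimal]
  exact ciInf_le ⟨0, Set.forall_mem_range.2 fun z : V => norm_nonneg (y - z)⟩ (⟨x, hx⟩ : V)

lemma ProbabilityMeasure.tendsto_mk_of_forall_integral_tendsto {E : Type*} [TopologicalSpace E]
    [MeasurableSpace E] [OpensMeasurableSpace E] {μs : ℕ → Measure E} {μ : Measure E}
    [∀ n, IsProbabilityMeasure (μs n)] [IsProbabilityMeasure μ]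
    (hweak : ∀ h : E → ℝ, Continuous h → (∃ M : ℝ, ∀ u : E, |h u| ≤ M) →
      Tendsto (fun n => ∫ u, h u ∂(μs n)) atTop (𝓝 (∫ u, h u ∂μ))) :
    Tendsto (β := ProbabilityMeasure E) (fun n => ⟨μs n, inferInstance⟩) atTop
      (𝓝 ⟨μ, inferInstance⟩) :=
  ProbabilityMeasure.tendsto_iff_forall_integral_tendsto.2 fun h =>
    hweak h h.continuous ⟨‖h‖, fun u => (Real.norm_eq_abs _).symm.trans_le (h.norm_coe_le_norm u)⟩

section WeakConvergence

variable {E : Type*} [MetricSpace E] [SecondCountableTopology E] [MeasurableSpace E]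
  [BorelSpace E]

lemma BoundedContinuousFunction.integrable_of_secondCountableTopology {G : Type*}
    [NormedAddCommGroup G] (h : E →ᵇ G)
    (ν : Measure E) [IsFiniteMeasure ν] : Integrable h ν :=
  .of_bound h.continuous.aestronglyMeasurable ‖h‖ (ae_of_all _ h.norm_coe_le_norm)

section Tightness

variable [CompleteSpace E] {μs : ℕ → ProbabilityMeasure E} {μ : ProbabilityMeasure E}

lemma ProbabilityMeasure.exists_isCompact_measureReal_compl_le_of_tendsto
    (hμ : Tendsto μs atTop (𝓝 μ)) {δ : ℝ} (hδ : 0 < δ) :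
    ∃ K, IsCompact K ∧ (∀ n, (μs n : Measure E).real Kᶜ ≤ δ) ∧ (μ : Measure E).real Kᶜ ≤ δ := by
  have hS := hμ.isCompact_insert_range
  have htight := isTightMeasureSet_of_isCompact_closure (hS.isClosed.closure_eq ▸ hS)
  obtain ⟨K, hK, hKc⟩ := isTightMeasureSet_iff_exists_isCompact_measure_compl_le.1 htight
    (ENNReal.ofReal δ) (ENNReal.ofReal_pos.2 hδ)
  have hreal : ∀ ν ∈ insert μ (Set.range μs), (ν : Measure E).real Kᶜ ≤ δ := fun ν hν =>
    ENNReal.toReal_le_of_le_ofReal hδ.le (hKc _ ⟨ν, hν, rfl⟩)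
  exact ⟨K, hK, fun n => hreal _ (Set.mem_insert_of_mem _ ⟨n, rfl⟩),
    hreal _ (Set.mem_insert _ _)⟩

end Tightness

variable {G : Type*} [NormedAddCommGroup G] [InnerProductSpace ℝ G] [CompleteSpace G]

section

variable {ι : Type*} {l : Filter ι} {νs : ι → ProbabilityMeasure E} {ν : ProbabilityMeasure E}

lemma ProbabilityMeasure.tendsto_inner_integral_of_tendsto (hν : Tendsto νs l (𝓝 ν))
    (h : E →ᵇ G) (y : G) :
    Tendsto (fun i => ⟪y, ∫ u, h u ∂(νs i : Measure E)⟫_ℝ) l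
      (𝓝 ⟪y, ∫ u, h u ∂(ν : Measure E)⟫_ℝ) := by
  simp_rw [← integral_inner (h.integrable_of_secondCountableTopology _)]
  exact ProbabilityMeasure.tendsto_iff_forall_integral_tendsto.1 hν
    ((innerSL ℝ y).compLeftContinuousBounded E h)

lemma ProbabilityMeasure.tendsto_starProjection_integral_of_tendsto (hν : Tendsto νs l (𝓝 ν))
    (h : E →ᵇ G) (V : Submodule ℝ G) [FiniteDimensional ℝ V] :
    Tendsto (fun i => V.starProjection (∫ u, h u ∂(νs i : Measure E))) l
      (𝓝 (V.starProjection (∫ u, h u ∂(ν : Measure E)))) := by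
  simp only [(stdOrthonormalBasis ℝ V).starProjection_eq_sum_rankOne,
    sum_apply, InnerProductSpace.rankOne_apply]
  exact tendsto_finsetSum _ fun i _ =>
    (ProbabilityMeasure.tendsto_inner_integral_of_tendsto hν h _).smul_const _

end

variable [CompleteSpace E] {μs : ℕ → ProbabilityMeasure E} {μ : ProbabilityMeasure E}

theorem ProbabilityMeasure.tendsto_integral_of_tendsto (hμ : Tendsto μs atTop (𝓝 μ))
    (h : E →ᵇ G) :
    Tendsto (fun n => ∫ u, h u ∂(μs n : Measure E)) atTop (𝓝 (∫ u, h u ∂(μ : Measure E))) := by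
  refine Tendsto.of_forall_dist_le fun ε hε => ?_
  obtain ⟨δ, hδ, hδε⟩ := exists_pos_mul_lt (half_pos hε) ‖h‖
  obtain ⟨K, hK, hKn, hKμ⟩ :=
    ProbabilityMeasure.exists_isCompact_measureReal_compl_le_of_tendsto hμ hδ
  obtain ⟨t, ht, hcover⟩ := Metric.totallyBounded_iff.1 (hK.image h.continuous).totallyBounded
    (ε / 2) (half_pos hε)
  let V := Submodule.span ℝ t
  have : FiniteDimensional ℝ V := FiniteDimensional.span_of_finite ℝ ht
  have hclose : ∀ u ∈ K, ‖h u - V.starProjection (h u)‖ ≤ ε / 2 := by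
    intro u hu
    obtain ⟨y, hy, hhy⟩ := Set.mem_iUnion₂.1 (hcover ⟨u, hu, rfl⟩)
    exact (V.norm_sub_starProjection_le (Submodule.subset_span hy) _).trans
      (by simpa [dist_eq_norm] using (Metric.mem_ball.1 hhy).le)
  have happrox : ∀ ν : ProbabilityMeasure E, (ν : Measure E).real Kᶜ ≤ δ →
      dist (∫ u, h u ∂(ν : Measure E)) (V.starProjection (∫ u, h u ∂(ν : Measure E))) ≤ ε := by
    intro ν hν
    have hint := h.integrable_of_secondCountableTopology (ν : Measure E)
    rw [dist_eq_norm, ← V.starProjection.integral_comp_comm hint, ← integral_sub hint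
      (V.starProjection.integrable_comp hint)]
    refine (norm_integral_le_add_mul_measureReal_compl hK.measurableSet (by positivity) hclose
      fun u => (V.norm_sub_starProjection_le V.zero_mem _).trans
        (by simpa using h.norm_coe_le_norm u)).trans ?_
    nlinarith [norm_nonneg h]
  exact ⟨_, _, ProbabilityMeasure.tendsto_starProjection_integral_of_tendsto hμ h V,
    .of_forall fun n => happrox _ (hKn n), by rw [dist_comm]; exact happrox μ hKμ⟩

theorem ProbabilityMeasure.tendsto_integral_of_tendsto_uncurry_of_bounded
    (hμ : Tendsto μs atTop (𝓝 μ)) {F : ℕ → E → G} {f : E → G}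
    (hF : ∀ k, Continuous (F k)) (hf : Continuous f)
    (hconv : ∀ x, Tendsto (Function.uncurry F) (atTop ×ˢ 𝓝 x) (𝓝 (f x)))
    {M : ℝ} (hFM : ∀ k u, ‖F k u‖ ≤ M) (hfM : ∀ u, ‖f u‖ ≤ M) :
    Tendsto (fun p : ℕ × ℕ => ∫ u, F p.1 u ∂(μs p.2 : Measure E)) (atTop ×ˢ atTop)
      (𝓝 (∫ u, f u ∂(μ : Measure E))) := by
  have hint : ∀ (ν : ProbabilityMeasure E) {h : E → G}, Continuous h → (∀ u, ‖h u‖ ≤ M) →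
      Integrable h (ν : Measure E) := fun ν h hh hhM =>
    .of_bound hh.aestronglyMeasurable M (ae_of_all _ hhM)
  refine Tendsto.of_forall_dist_le fun ε hε => ?_
  obtain ⟨δ, hδ, hδε⟩ := exists_pos_mul_lt (half_pos hε) (M + M)
  obtain ⟨K, hK, hKn, -⟩ :=
    ProbabilityMeasure.exists_isCompact_measureReal_compl_le_of_tendsto hμ hδ
  have hunif : ∀ᶠ k in atTop, ∀ u ∈ K, dist (f u) (F k u) < ε / 2 :=
    Metric.tendstoUniformlyOn_iff.1 ((tendstoLocallyUniformlyOn_iff_tendstoUniformlyOn_of_compact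
      hK).1 (TendstoLocallyUniformly.of_tendsto_uncurry hf hconv).tendstoLocallyUniformlyOn) _
      (half_pos hε)
  have hlim : Tendsto (fun n => ∫ u, f u ∂(μs n : Measure E)) atTop
      (𝓝 (∫ u, f u ∂(μ : Measure E))) :=
    ProbabilityMeasure.tendsto_integral_of_tendsto hμ (.ofNormedAddCommGroup f hf M hfM)
  refine ⟨_, _, hlim.comp tendsto_snd, ?_, (dist_self _).trans_le hε.le⟩
  filter_upwards [hunif.prod_inl atTop] with p hp
  have hM : 0 ≤ M :=
    (norm_nonneg _).trans (hfM (nonempty_of_isProbabilityMeasure (μ : Measure E)).some)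
  rw [Function.comp_apply, dist_eq_norm,
    ← integral_sub (hint _ (hF p.1) (hFM p.1)) (hint _ hf hfM)]
  refine (norm_integral_le_add_mul_measureReal_compl hK.measurableSet (half_pos hε).le
    (fun u hu => by rw [← dist_eq_norm, dist_comm]; exact (hp u hu).le)
    (fun u => (norm_sub_le _ _).trans (add_le_add (hFM _ u) (hfM u)))).trans ?_
  nlinarith [hKn p.2]

end WeakConvergence

section ExponentialMoments

variable {E : Type*} [NormedAddCommGroup E] [MeasurableSpace E]
  {G : Type*} [NormedAddCommGroup G]
  {ν : Measure E} {f : E → G} {b c : ℝ}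

lemma lintegral_ofReal_norm_le_of_norm_le_mul_exp (hc : 0 ≤ c)
    (hf : ∀ u, ‖f u‖ ≤ c * exp (b * ‖u‖)) :
    ∫⁻ u, ENNReal.ofReal ‖f u‖ ∂ν ≤
      ENNReal.ofReal c * ∫⁻ u, ENNReal.ofReal (exp (b * ‖u‖)) ∂ν := by
  rw [← lintegral_const_mul' _ _ ENNReal.ofReal_ne_top]
  refine lintegral_mono fun u => ?_
  rw [← ENNReal.ofReal_mul hc]
  exact ENNReal.ofReal_le_ofReal (hf u)

lemma integrable_of_norm_le_mul_exp (hc : 0 ≤ c) (hfm : AEStronglyMeasurable f ν)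
    (hf : ∀ u, ‖f u‖ ≤ c * exp (b * ‖u‖))
    (hmom : ∫⁻ u, ENNReal.ofReal (exp (b * ‖u‖)) ∂ν ≠ ∞) : Integrable f ν :=
  ⟨hfm, (hasFiniteIntegral_iff_norm f).2 <|
    (lintegral_ofReal_norm_le_of_norm_le_mul_exp hc hf).trans_lt
      (ENNReal.mul_lt_top ENNReal.ofReal_lt_top hmom.lt_top)⟩

lemma norm_integral_le_of_norm_le_mul_exp [NormedSpace ℝ G] (hc : 0 ≤ c)
    (hf : ∀ u, ‖f u‖ ≤ c * exp (b * ‖u‖))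
    {M : ℝ≥0∞} (hM : M ≠ ∞) (hmom : ∫⁻ u, ENNReal.ofReal (exp (b * ‖u‖)) ∂ν ≤ M) :
    ‖∫ u, f u ∂ν‖ ≤ c * M.toReal := by
  calc ‖∫ u, f u ∂ν‖ ≤ (∫⁻ u, ENNReal.ofReal ‖f u‖ ∂ν).toReal :=
        norm_integral_le_lintegral_norm f
    _ ≤ (ENNReal.ofReal c * M).toReal :=
        ENNReal.toReal_mono (ENNReal.mul_ne_top ENNReal.ofReal_ne_top hM)
          ((lintegral_ofReal_norm_le_of_norm_le_mul_exp hc hf).trans (by gcongr))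
    _ = c * M.toReal := by rw [ENNReal.toReal_mul, ENNReal.toReal_ofReal hc]

end ExponentialMoments

section Cutoff

variable {E : Type*} [NormedAddCommGroup E] {G : Type*} [NormedAddCommGroup G] [NormedSpace ℝ G]

def radialCutoff (R : ℝ) (u : E) : ℝ := max 0 (min 1 (R + 1 - ‖u‖))

variable {R : ℝ} {u : E}

lemma continuous_radialCutoff : Continuous (radialCutoff R : E → ℝ) :=
  continuous_const.max (continuous_const.min (continuous_const.sub continuous_norm))

lemma radialCutoff_nonneg : 0 ≤ radialCutoff R u := le_max_left _ _

lemma radialCutoff_le_one : radialCutoff R u ≤ 1 := max_le zero_le_one (min_le_left _ _)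

lemma radialCutoff_eq_one (hu : ‖u‖ ≤ R) : radialCutoff R u = 1 := by
  rw [radialCutoff, min_eq_left (by linarith), max_eq_right zero_le_one]

lemma radialCutoff_eq_zero (hu : R + 1 ≤ ‖u‖) : radialCutoff R u = 0 :=
  max_eq_left ((min_le_right _ _).trans (by linarith))

lemma norm_radialCutoff_smul_le {v : G} {b c : ℝ} (hb : 0 ≤ b) (hc : 0 ≤ c)
    (hv : ‖v‖ ≤ c * exp (b * ‖u‖)) : ‖radialCutoff R u • v‖ ≤ c * exp (b * (R + 1)) := by
  rcases le_or_gt (R + 1) ‖u‖ with hu | hu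
  · rw [radialCutoff_eq_zero hu, zero_smul, norm_zero]
    positivity
  · rw [norm_smul, Real.norm_of_nonneg radialCutoff_nonneg]
    calc radialCutoff R u * ‖v‖ ≤ 1 * (c * exp (b * ‖u‖)) :=
          mul_le_mul radialCutoff_le_one hv (norm_nonneg v) zero_le_one
      _ ≤ c * exp (b * (R + 1)) := by
          rw [one_mul]
          gcongr

lemma norm_one_sub_radialCutoff_smul_le {v : G} {b c : ℝ} (hc : 0 ≤ c)
    (hv : ‖v‖ ≤ c * exp (b * ‖u‖)) :
    ‖(1 - radialCutoff R u) • v‖ ≤ c * exp (-R) * exp ((b + 1) * ‖u‖) := by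
  rcases le_or_gt ‖u‖ R with hu | hu
  · rw [radialCutoff_eq_one hu, sub_self, zero_smul, norm_zero]
    positivity
  · rw [norm_smul, Real.norm_of_nonneg (sub_nonneg.2 radialCutoff_le_one)]
    calc (1 - radialCutoff R u) * ‖v‖ ≤ 1 * (c * exp (b * ‖u‖)) :=
          mul_le_mul (by linarith [radialCutoff_nonneg (R := R) (u := u)]) hv (norm_nonneg v)
            zero_le_one
      _ ≤ c * exp (-R) * exp ((b + 1) * ‖u‖) := by
          rw [one_mul, mul_assoc, ← exp_add]
          gcongr
          linarith

lemma dist_integral_radialCutoff_smul_le [SecondCountableTopology E] [MeasurableSpace E]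
    [BorelSpace E] {ν : Measure E} [IsFiniteMeasure ν] {f : E → G}
    (hf : Continuous f) {b c : ℝ} (hc : 0 ≤ c) (hfb : ∀ u, ‖f u‖ ≤ c * exp (b * ‖u‖))
    {M : ℝ≥0∞} (hM : M ≠ ∞) (hmom : ∫⁻ u, ENNReal.ofReal (exp ((b + 1) * ‖u‖)) ∂ν ≤ M)
    (R : ℝ) :
    dist (∫ u, f u ∂ν) (∫ u, radialCutoff R u • f u ∂ν) ≤ c * exp (-R) * M.toReal := by
  have hfb' : ∀ u, ‖f u‖ ≤ c * exp ((b + 1) * ‖u‖) := fun u =>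
    (hfb u).trans (by gcongr; linarith [norm_nonneg u])
  have hmom' := (hmom.trans_lt hM.lt_top).ne
  have hint := integrable_of_norm_le_mul_exp hc hf.aestronglyMeasurable hfb' hmom'
  have hint' : Integrable (fun u => radialCutoff R u • f u) ν :=
    integrable_of_norm_le_mul_exp hc
      ((continuous_radialCutoff.smul hf).aestronglyMeasurable) (fun u => ?_) hmom'
  · rw [dist_eq_norm, ← integral_sub hint hint']
    simp_rw [fun u => show f u - radialCutoff R u • f u = (1 - radialCutoff R u) • f u by
      rw [sub_smul, one_smul]]
    exact norm_integral_le_of_norm_le_mul_exp (by positivity)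
      (fun u => norm_one_sub_radialCutoff_smul_le hc (hfb u)) hM hmom
  · rw [norm_smul, Real.norm_of_nonneg radialCutoff_nonneg]
    exact mul_le_of_le_one_left (norm_nonneg _) radialCutoff_le_one |>.trans (hfb' u)

end Cutoff

section

variable {E : Type*} [NormedAddCommGroup E] [CompleteSpace E] [SecondCountableTopology E]
  [MeasurableSpace E] [BorelSpace E]
  {G : Type*} [NormedAddCommGroup G] [InnerProductSpace ℝ G] [CompleteSpace G]
  {μs : ℕ → ProbabilityMeasure E} {μ : ProbabilityMeasure E}

theorem ProbabilityMeasure.tendsto_integral_of_tendsto_uncurry_of_norm_le_mul_exp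
    (hμ : Tendsto μs atTop (𝓝 μ)) {F : ℕ → E → G} {f : E → G}
    (hF : ∀ k, Continuous (F k)) (hf : Continuous f)
    (hconv : ∀ x, Tendsto (Function.uncurry F) (atTop ×ˢ 𝓝 x) (𝓝 (f x)))
    {b c : ℝ} (hb : 0 ≤ b) (hc : 0 ≤ c) (hFb : ∀ k u, ‖F k u‖ ≤ c * exp (b * ‖u‖))
    (hfb : ∀ u, ‖f u‖ ≤ c * exp (b * ‖u‖)) {M : ℝ≥0∞} (hM : M ≠ ∞)
    (hmoms : ∀ n, ∫⁻ u, ENNReal.ofReal (exp ((b + 1) * ‖u‖)) ∂(μs n : Measure E) ≤ M)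
    (hmom : ∫⁻ u, ENNReal.ofReal (exp ((b + 1) * ‖u‖)) ∂(μ : Measure E) ≤ M) :
    Tendsto (fun p : ℕ × ℕ => ∫ u, F p.1 u ∂(μs p.2 : Measure E)) (atTop ×ˢ atTop)
      (𝓝 (∫ u, f u ∂(μ : Measure E))) := by
  refine Tendsto.of_forall_dist_le fun ε hε => ?_
  have htail : Tendsto (fun R => c * exp (-R) * M.toReal) atTop (𝓝 0) := by
    simpa using (tendsto_exp_neg_atTop_nhds_zero.const_mul c).mul_const M.toReal
  obtain ⟨R, hR⟩ := (htail.eventually_le_const hε).exists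
  have hcut := ProbabilityMeasure.tendsto_integral_of_tendsto_uncurry_of_bounded hμ
    (F := fun k u => radialCutoff R u • F k u) (f := fun u => radialCutoff R u • f u)
    (fun k => continuous_radialCutoff.smul (hF k)) (continuous_radialCutoff.smul hf)
    (fun x => ((continuous_radialCutoff.tendsto x).comp tendsto_snd).smul (hconv x))
    (fun k u => norm_radialCutoff_smul_le hb hc (hFb k u))
    (fun u => norm_radialCutoff_smul_le hb hc (hfb u))
  refine ⟨_, _, hcut, .of_forall fun p => ?_, ?_⟩
  · exact (dist_integral_radialCutoff_smul_le (hF p.1) hc (hFb p.1) hM (hmoms p.2) R).trans hR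
  · rw [dist_comm]
    exact (dist_integral_radialCutoff_smul_le hf hc hfb hM hmom R).trans hR

end

section GaussianLikelihood

variable {E : Type*} [NormedAddCommGroup E] [NormedSpace ℝ E]
  {F : Type*} [NormedAddCommGroup F] [NormedSpace ℝ F]
  (B : F →L[ℝ] F →L[ℝ] ℝ)

noncomputable def gaussianLikelihood (A : E →L[ℝ] F) (m : F) (u : E) : ℝ :=
  exp (-(1 / 2) * ‖A u‖ ^ 2 + B (A u) m)

lemma continuous_gaussianLikelihood (A : E →L[ℝ] F) (m : F) :
    Continuous (gaussianLikelihood B A m) :=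
  ((continuous_const.mul (A.continuous.norm.pow 2)).add
    ((B.flip m).comp A).continuous).rexp

lemma norm_gaussianLikelihood_le (A : E →L[ℝ] F) {m : F} {Cm : ℝ} (hm : ‖m‖ ≤ Cm) (u : E) :
    ‖gaussianLikelihood B A m u‖ ≤ exp ((‖B‖ * Cm) ^ 2 / 2) := by
  have hB : B (A u) m ≤ ‖B‖ * Cm * ‖A u‖ :=
    calc B (A u) m ≤ ‖B‖ * ‖A u‖ * ‖m‖ := (le_abs_self _).trans (B.le_opNorm₂ _ _)
      _ ≤ ‖B‖ * Cm * ‖A u‖ := by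
        rw [mul_right_comm]; gcongr
  rw [gaussianLikelihood, Real.norm_of_nonneg (exp_pos _).le, exp_le_exp]
  nlinarith [sq_nonneg (‖A u‖ - ‖B‖ * Cm)]

lemma ContinuousLinearMap.tendsto_uncurry_apply_of_norm_le {A : E →L[ℝ] F} {Ak : ℕ → E →L[ℝ] F}
    {CA : ℝ} (hAbd : ∀ k, ‖Ak k‖ ≤ CA)
    (hAconv : ∀ u, Tendsto (fun k => ‖Ak k u - A u‖) atTop (𝓝 0)) (x : E) : Tendsto (fun p : ℕ × E => Ak p.1 p.2) (atTop ×ˢ 𝓝 x) (𝓝 (A x)) := by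
  rw [tendsto_iff_norm_sub_tendsto_zero]
  have hbound : ∀ p : ℕ × E, ‖Ak p.1 p.2 - A x‖ ≤ CA * ‖p.2 - x‖ + ‖Ak p.1 x - A x‖ := by
    intro p
    calc ‖Ak p.1 p.2 - A x‖ = ‖Ak p.1 (p.2 - x) + (Ak p.1 x - A x)‖ := by
          rw [map_sub, sub_add_sub_cancel]
      _ ≤ CA * ‖p.2 - x‖ + ‖Ak p.1 x - A x‖ :=
          (norm_add_le _ _).trans (by gcongr; exact (Ak p.1).le_of_opNorm_le (hAbd _) _)
  refine squeeze_zero (fun _ => norm_nonneg _) hbound ?_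
  have h₁ : Tendsto (fun p : ℕ × E => CA * ‖p.2 - x‖) (atTop ×ˢ 𝓝 x) (𝓝 0) := by
    simpa using ((tendsto_iff_norm_sub_tendsto_zero.1 (tendsto_id (x := 𝓝 x))).comp
      tendsto_snd).const_mul CA
  simpa using h₁.add ((hAconv x).comp tendsto_fst)

lemma tendsto_gaussianLikelihood {A : E →L[ℝ] F} {Ak : ℕ → E →L[ℝ] F} {CA : ℝ}
    (hAbd : ∀ k, ‖Ak k‖ ≤ CA) (hAconv : ∀ u, Tendsto (fun k => ‖Ak k u - A u‖) atTop (𝓝 0))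
    {m : F} {mk : ℕ → F} (hm : Tendsto mk atTop (𝓝 m)) (x : E) :
    Tendsto (Function.uncurry fun k => gaussianLikelihood B (Ak k) (mk k)) (atTop ×ˢ 𝓝 x)
      (𝓝 (gaussianLikelihood B A m x)) := by
  have hA := ContinuousLinearMap.tendsto_uncurry_apply_of_norm_le hAbd hAconv x
  exact (((hA.norm.pow 2).const_mul _).add
    ((B.continuous₂.tendsto _).comp (hA.prodMk_nhds (hm.comp tendsto_fst)))).rexp

end GaussianLikelihood

theorem statement2_general
    {E : Type*} [NormedAddCommGroup E] [InnerProductSpace ℝ E] [CompleteSpace E]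
    [SecondCountableTopology E] [MeasurableSpace E] [BorelSpace E]
    {F : Type*} [NormedAddCommGroup F] [InnerProductSpace ℝ F]
    {G : Type*} [NormedAddCommGroup G] [InnerProductSpace ℝ G] [CompleteSpace G]
    (μs : ℕ → Measure E) (μ : Measure E)
    [∀ n, IsProbabilityMeasure (μs n)] [IsProbabilityMeasure μ]
    (hweak : ∀ h : E → ℝ, Continuous h → (∃ M : ℝ, ∀ u : E, |h u| ≤ M) →
      Tendsto (fun n => ∫ u, h u ∂(μs n)) atTop (nhds (∫ u, h u ∂μ)))
    (C : ℝ → ℝ)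
    (hmom : ∀ b > 0, ∀ n : ℕ,
      ∫⁻ u, ENNReal.ofReal (Real.exp (b * ‖u‖)) ∂(μs n) ≤ ENNReal.ofReal (C b))
    (hmom' : ∀ b > 0,
      ∫⁻ u, ENNReal.ofReal (Real.exp (b * ‖u‖)) ∂μ ≤ ENNReal.ofReal (C b))
    (A : E →L[ℝ] F) (Ak : ℕ → E →L[ℝ] F)
    (hAbd : ∃ CA : ℝ, ∀ k, ‖Ak k‖ ≤ CA)
    (hAconv : ∀ u : E, Tendsto (fun k => ‖Ak k u - A u‖) atTop (nhds 0))
    (m : F) (mk : ℕ → F) (hm : Tendsto mk atTop (nhds m))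
    (B : F →L[ℝ] F →L[ℝ] ℝ)
    (g : E → G) (hg : Continuous g) (Cg : ℝ) (hCg : 0 < Cg)
    (hgbd : ∀ u : E, ‖g u‖ ≤ Cg * Real.exp (Cg * ‖u‖)) :
    Tendsto
      (fun p : ℕ × ℕ =>
        (∫ u, Real.exp (-(1/2) * ‖Ak p.1 u‖ ^ 2 + B (Ak p.1 u) (mk p.1)) ∂(μs p.2))⁻¹ •
          ∫ u, Real.exp (-(1/2) * ‖Ak p.1 u‖ ^ 2 + B (Ak p.1 u) (mk p.1)) • g u ∂(μs p.2))
      (atTop ×ˢ atTop)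
      (nhds ((∫ u, Real.exp (-(1/2) * ‖A u‖ ^ 2 + B (A u) m) ∂μ)⁻¹ •
        ∫ u, Real.exp (-(1/2) * ‖A u‖ ^ 2 + B (A u) m) • g u ∂μ)) := by
  have hP := ProbabilityMeasure.tendsto_mk_of_forall_integral_tendsto hweak
  obtain ⟨CA, hCA⟩ := hAbd
  obtain ⟨Cm, hCm⟩ : ∃ Cm, ∀ k, ‖mk k‖ ≤ Cm := ⟨_, fun k => le_ciSup hm.norm.bddAbove_range k⟩
  have hmCm : ‖m‖ ≤ Cm := le_of_tendsto' hm.norm hCm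
  set D := exp ((‖B‖ * Cm) ^ 2 / 2)
  have hΞk := fun k => norm_gaussianLikelihood_le B (Ak k) (hCm k)
  have hΞ := norm_gaussianLikelihood_le B A hmCm
  have hΞg : ∀ {a : ℝ} {u : E}, ‖a‖ ≤ D → ‖a • g u‖ ≤ D * Cg * exp (Cg * ‖u‖) := fun ha =>
    (norm_smul_le _ _).trans ((mul_le_mul ha (hgbd _) (norm_nonneg _) (exp_pos _).le).trans_eq
      (mul_assoc _ _ _).symm)
  have hconv := tendsto_gaussianLikelihood B hCA hAconv hm
  have hnum := ProbabilityMeasure.tendsto_integral_of_tendsto_uncurry_of_norm_le_mul_exp hP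
    (F := fun k u => gaussianLikelihood B (Ak k) (mk k) u • g u)
    (f := fun u => gaussianLikelihood B A m u • g u)
    (fun k => (continuous_gaussianLikelihood B _ _).smul hg)
    ((continuous_gaussianLikelihood B _ _).smul hg)
    (fun x => (hconv x).smul ((hg.tendsto x).comp tendsto_snd)) hCg.le (by positivity)
    (fun k u => hΞg (hΞk k u)) (fun u => hΞg (hΞ u))
    ENNReal.ofReal_ne_top (hmom (Cg + 1) (by positivity)) (hmom' (Cg + 1) (by positivity))
  have hden := ProbabilityMeasure.tendsto_integral_of_tendsto_uncurry_of_norm_le_mul_exp hP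
    (fun k => continuous_gaussianLikelihood B _ _) (continuous_gaussianLikelihood B _ _)
    hconv le_rfl (exp_pos _).le (fun k u => by simpa using hΞk k u) (fun u => by simpa using hΞ u)
    ENNReal.ofReal_ne_top (hmom (0 + 1) (by norm_num)) (hmom' (0 + 1) (by norm_num))
  have hpos : 0 < ∫ u, gaussianLikelihood B A m u ∂μ :=
    integral_exp_pos (.of_bound (continuous_gaussianLikelihood B A m).aestronglyMeasurable D
      (ae_of_all _ hΞ))
  exact (hden.inv₀ hpos.ne').smul hnum

/-- Convergence of reconstructors: let `E, F, G` be real separable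
Hilbert spaces, `(μs n)` and `μ` Borel probability measures on `E` uniformly
discretized with exponential weights, `Ak k → A` strongly with uniformly bounded
norms, `mk k → m` in `F`, `B` a continuous bilinear form on `F`, and
`g : E → G` continuous of at most exponential growth. With the Gaussian likelihood
factors `Ξ_k(u) = exp(−½‖Ak k u‖² + B (Ak k u) (mk k))` and
`Ξ(u) = exp(−½‖A u‖² + B (A u) m)`, the ratios of Bochner integrals
`(∫ Ξ_k(u) • g u ∂μs n) / (∫ Ξ_k ∂μs n)` converge, as `k, n → ∞` jointly,
to `(∫ Ξ(u) • g u ∂μ) / (∫ Ξ ∂μ)` in `G`. -/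
theorem statement2
    {E : Type*} [NormedAddCommGroup E] [InnerProductSpace ℝ E] [CompleteSpace E]
    [SecondCountableTopology E] [MeasurableSpace E] [BorelSpace E]
    {F : Type*} [NormedAddCommGroup F] [InnerProductSpace ℝ F] [CompleteSpace F]
    [SecondCountableTopology F]
    {G : Type*} [NormedAddCommGroup G] [InnerProductSpace ℝ G] [CompleteSpace G]
    [SecondCountableTopology G]
    (μs : ℕ → Measure E) (μ : Measure E)
    [∀ n, IsProbabilityMeasure (μs n)] [IsProbabilityMeasure μ]
    (hweak : ∀ h : E → ℝ, Continuous h → (∃ M : ℝ, ∀ u : E, |h u| ≤ M) →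
      Tendsto (fun n => ∫ u, h u ∂(μs n)) atTop (nhds (∫ u, h u ∂μ)))
    (C : ℝ → ℝ) (hC : ∀ b > 0, 0 < C b)
    (hmom : ∀ b > 0, ∀ n : ℕ,
      ∫⁻ u, ENNReal.ofReal (Real.exp (b * ‖u‖)) ∂(μs n) ≤ ENNReal.ofReal (C b))
    (hmom' : ∀ b > 0,
      ∫⁻ u, ENNReal.ofReal (Real.exp (b * ‖u‖)) ∂μ ≤ ENNReal.ofReal (C b))
    (A : E →L[ℝ] F) (Ak : ℕ → E →L[ℝ] F)
    (hAbd : ∃ CA : ℝ, ∀ k, ‖Ak k‖ ≤ CA)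
    (hAconv : ∀ u : E, Tendsto (fun k => ‖Ak k u - A u‖) atTop (nhds 0))
    (m : F) (mk : ℕ → F) (hm : Tendsto mk atTop (nhds m))
    (B : F →L[ℝ] F →L[ℝ] ℝ)
    (g : E → G) (hg : Continuous g) (Cg : ℝ) (hCg : 0 < Cg)
    (hgbd : ∀ u : E, ‖g u‖ ≤ Cg * Real.exp (Cg * ‖u‖)) :
    Tendsto
      (fun p : ℕ × ℕ =>
        (∫ u, Real.exp (-(1/2) * ‖Ak p.1 u‖ ^ 2 + B (Ak p.1 u) (mk p.1)) ∂(μs p.2))⁻¹ •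
          ∫ u, Real.exp (-(1/2) * ‖Ak p.1 u‖ ^ 2 + B (Ak p.1 u) (mk p.1)) • g u ∂(μs p.2))
      (atTop ×ˢ atTop)
      (nhds ((∫ u, Real.exp (-(1/2) * ‖A u‖ ^ 2 + B (A u) m) ∂μ)⁻¹ •
        ∫ u, Real.exp (-(1/2) * ‖A u‖ ^ 2 + B (A u) m) • g u ∂μ)) :=
  statement2_general μs μ hweak C hmom hmom' A Ak hAbd hAconv m mk hm B g hg Cg hCg hgbd
end

section
/- Let E, F be real separable Hilbert spaces. Let (λ_n)_{n∈ℕ} and λ be Borel probability measures on E that are uniformly discretized with exponential weights. Let A and A_k (k ∈ ℕ) be bounded linear operators from E to F with sup_k ‖A_k‖ < ∞ and ‖A_k u − A u‖_F → 0 for every u ∈ E, and let m_k → m in F. Let B : F × F → ℝ be a continuous bilinear form, and define Ξ_k(u) = exp(−½‖A_k u‖²_F + B(A_k u, m_k)) and Ξ(u) = exp(−½‖A u‖²_F + B(A u, m)). Then for every bounded continuous function h : E → ℝ, as k and n tend to infinity jointly, (∫_E h(u) Ξ_k(u) dλ_n(u)) / (∫_E Ξ_k(u) dλ_n(u)) →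 (∫_E h(u) Ξ(u) dλ(u)) / (∫_E Ξ(u) dλ(u)); that is, the posterior probability measures with density Ξ_k / ∫ Ξ_k dλ_n with respect to λ_n converge weakly to the posterior probability measure with density Ξ / ∫ Ξ dλ with respect to λ. -/
/-!
Truncating at height `M e^{bR}` changes the integral of a function bounded by `M e^{b‖u‖}` by at
most `M e^{-(b'-b)R}` times the `b'`-exponential moment, uniformly in `n`; so weak convergence of
the priors extends to continuous functions of exponential growth. The likelihoods `Ξ_k` are
dominated by `e^{b‖u‖}`, converge pointwise to `Ξ` and are uniformly Lipschitz on balls, which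
yields `∫ |Ξ_k - Ξ| dλ_n → 0` jointly in `(k, n)`. Numerators and denominators of the posterior
expectations therefore converge, and the limiting denominator is positive.
-/
open MeasureTheory Filter Real Topology Metric Set
open scoped NNReal ENNReal

def truncate (c x : ℝ) : ℝ := max (-c) (min x c)

lemma lipschitzWith_truncate (c : ℝ) : LipschitzWith 1 (truncate c) :=
  (LipschitzWith.id.min_const c).const_max (-c)

@[fun_prop]
lemma continuous_truncate (c : ℝ) : Continuous (truncate c) :=
  (lipschitzWith_truncate c).continuous

lemma abs_truncate_le (c x : ℝ) : |truncate c x| ≤ |c| :=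
  abs_le.2 ⟨(neg_le_neg (le_abs_self c)).trans (le_max_left _ _),
    max_le (neg_le_abs c) ((min_le_right _ _).trans (le_abs_self c))⟩

lemma truncate_eq_self {c x : ℝ} (h : |x| ≤ c) : truncate c x = x := by
  obtain ⟨h₁, h₂⟩ := abs_le.1 h
  rw [truncate, min_eq_left h₂, max_eq_right h₁]

lemma abs_sub_truncate_le_abs {c : ℝ} (hc : 0 ≤ c) (x : ℝ) : |x - truncate c x| ≤ |x| := by
  unfold truncate
  grind

/-- Beyond the level `M e^{bR}` the bound `M e^{bt}` forces `t > R`, so the excess is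
controlled by the stronger weight `e^{b't}` with the gain `e^{-(b'-b)R}`. -/
lemma abs_sub_truncate_le {M b b' t R x : ℝ} (hb : 0 ≤ b) (hbb' : b ≤ b')
    (hx : |x| ≤ M * exp (b * t)) :
    |x - truncate (M * exp (b * R)) x| ≤ M * exp (-((b' - b) * R)) * exp (b' * t) := by
  have hM : 0 ≤ M := nonneg_of_mul_nonneg_left ((abs_nonneg x).trans hx) (exp_pos _)
  by_cases hxR : |x| ≤ M * exp (b * R)
  · rw [truncate_eq_self hxR, sub_self, abs_zero]
    positivity
  have hRt : R ≤ t := by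
    by_contra! htR
    have : M * exp (b * t) ≤ M * exp (b * R) := by gcongr
    linarith
  calc |x - truncate (M * exp (b * R)) x| ≤ |x| := abs_sub_truncate_le_abs (by positivity) x
    _ ≤ M * exp (b * t) := hx
    _ = M * exp (-((b' - b) * t)) * exp (b' * t) := by rw [mul_assoc, ← exp_add]; ring_nf
    _ ≤ M * exp (-((b' - b) * R)) * exp (b' * t) := by gcongr

lemma tendsto_mul_exp_neg_mul_atTop {δ : ℝ} (hδ : 0 < δ) (a c : ℝ) :
    Tendsto (fun R => a * exp (-(δ * R)) * c) atTop (𝓝 0) := by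
  simpa using ((tendsto_exp_neg_atTop_nhds_zero.comp
    (tendsto_id.const_mul_atTop hδ)).const_mul a).mul_const c

lemma LipschitzOnWith.ciSup {α ι : Type*} [PseudoMetricSpace α] [Nonempty ι] {f : ι → α → ℝ}
    {s : Set α} {K : ℝ≥0} (hf : ∀ i, LipschitzOnWith K (f i) s)
    (hbdd : ∀ x ∈ s, BddAbove (range fun i => f i x)) :
    LipschitzOnWith K (fun x => ⨆ i, f i x) s :=
  LipschitzOnWith.of_le_add_mul K fun x hx y hy => ciSup_le fun i =>
    ((hf i).le_add_mul hx hy).trans (by gcongr; exact le_ciSup (hbdd y hy) i)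

lemma tendsto_iSup_abs_add_atTop {a : ℕ → ℝ} (ha : Tendsto a atTop (𝓝 0)) :
    Tendsto (fun K => ⨆ i, |a (K + i)|) atTop (𝓝 0) := by
  rw [Metric.tendsto_atTop] at ha ⊢
  intro ε hε
  obtain ⟨N, hN⟩ := ha (ε / 2) (half_pos hε)
  refine ⟨N, fun K hK => ?_⟩
  have hsup : ⨆ i, |a (K + i)| ≤ ε / 2 := ciSup_le fun i => by
    simpa using (hN (K + i) (by omega)).le
  rw [Real.dist_0_eq_abs, abs_of_nonneg (Real.iSup_nonneg fun i => abs_nonneg _)]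
  linarith

section ExponentialMoments

variable {E : Type*} [NormedAddCommGroup E] [MeasurableSpace E] [OpensMeasurableSpace E]

lemma integrable_exp_mul_norm {ν : Measure E} {b : ℝ} {K : ℝ≥0∞}
    (hK : ∫⁻ u, ENNReal.ofReal (exp (b * ‖u‖)) ∂ν ≤ K) (hK_top : K ≠ ∞) :
    Integrable (fun u => exp (b * ‖u‖)) ν :=
  (lintegral_ofReal_ne_top_iff_integrable (by fun_prop)
    (ae_of_all _ fun _ => (exp_pos _).le)).1 (ne_top_of_le_ne_top hK_top hK)

lemma integral_exp_mul_norm_le {ν : Measure E} {b : ℝ} {K : ℝ≥0∞}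
    (hK : ∫⁻ u, ENNReal.ofReal (exp (b * ‖u‖)) ∂ν ≤ K) (hK_top : K ≠ ∞) :
    ∫ u, exp (b * ‖u‖) ∂ν ≤ K.toReal := by
  rw [integral_eq_lintegral_of_nonneg_ae (ae_of_all _ fun _ => (exp_pos _).le) (by fun_prop)]
  exact ENNReal.toReal_mono hK_top hK

lemma integrable_of_abs_le_mul_exp {ν : Measure E} {f : E → ℝ} {M b b' : ℝ} {K : ℝ≥0∞}
    (hf : AEStronglyMeasurable f ν) (hfb : ∀ u, |f u| ≤ M * exp (b * ‖u‖)) (hbb' : b ≤ b')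
    (hK : ∫⁻ u, ENNReal.ofReal (exp (b' * ‖u‖)) ∂ν ≤ K) (hK_top : K ≠ ∞) :
    Integrable f ν := by
  have hM : 0 ≤ M := nonneg_of_mul_nonneg_left ((abs_nonneg _).trans (hfb 0)) (exp_pos _)
  refine ((integrable_exp_mul_norm hK hK_top).const_mul M).mono' hf (ae_of_all _ fun u => ?_)
  rw [Real.norm_eq_abs]
  exact (hfb u).trans (by gcongr)

lemma integral_abs_sub_truncate_le {ν : Measure E} {f : E → ℝ} {M b b' : ℝ} {K : ℝ≥0∞}
    (hfb : ∀ u, |f u| ≤ M * exp (b * ‖u‖)) (hb : 0 ≤ b) (hbb' : b ≤ b')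
    (hK : ∫⁻ u, ENNReal.ofReal (exp (b' * ‖u‖)) ∂ν ≤ K) (hK_top : K ≠ ∞) (R : ℝ) :
    ∫ u, |f u - truncate (M * exp (b * R)) (f u)| ∂ν ≤ M * exp (-((b' - b) * R)) * K.toReal := by
  have hM : 0 ≤ M := nonneg_of_mul_nonneg_left ((abs_nonneg _).trans (hfb 0)) (exp_pos _)
  calc ∫ u, |f u - truncate (M * exp (b * R)) (f u)| ∂ν
      ≤ ∫ u, M * exp (-((b' - b) * R)) * exp (b' * ‖u‖) ∂ν :=
        integral_mono_of_nonneg (ae_of_all _ fun _ => abs_nonneg _)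
          ((integrable_exp_mul_norm hK hK_top).const_mul _)
          (ae_of_all _ fun u => abs_sub_truncate_le hb hbb' (hfb u))
    _ ≤ M * exp (-((b' - b) * R)) * K.toReal := by
      rw [integral_const_mul]
      gcongr
      exact integral_exp_mul_norm_le hK hK_top

end ExponentialMoments

section WeakConvergence

variable {E : Type*} [NormedAddCommGroup E] [MeasurableSpace E] [OpensMeasurableSpace E]
  {μs : ℕ → Measure E} {μ : Measure E} [∀ n, IsFiniteMeasure (μs n)] [IsFiniteMeasure μ]

theorem tendsto_integral_of_abs_le_mul_exp
    (hweak : ∀ h : E → ℝ, Continuous h → (∃ M : ℝ, ∀ u : E, |h u| ≤ M) →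
      Tendsto (fun n => ∫ u, h u ∂(μs n)) atTop (𝓝 (∫ u, h u ∂μ)))
    {b b' : ℝ} {K : ℝ≥0∞} (hb : 0 ≤ b) (hbb' : b < b')
    (hK : ∀ n, ∫⁻ u, ENNReal.ofReal (exp (b' * ‖u‖)) ∂(μs n) ≤ K)
    (hK' : ∫⁻ u, ENNReal.ofReal (exp (b' * ‖u‖)) ∂μ ≤ K) (hK_top : K ≠ ∞)
    {f : E → ℝ} {M : ℝ} (hf : Continuous f) (hfb : ∀ u, |f u| ≤ M * exp (b * ‖u‖)) :
    Tendsto (fun n => ∫ u, f u ∂(μs n)) atTop (𝓝 (∫ u, f u ∂μ)) := by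
  rw [Metric.tendsto_atTop]
  intro ε hε
  obtain ⟨R, hR⟩ := ((tendsto_mul_exp_neg_mul_atTop (sub_pos.2 hbb') M K.toReal).eventually
    (gt_mem_nhds (by positivity : (0 : ℝ) < ε / 3))).exists
  set g := fun u => truncate (M * exp (b * R)) (f u)
  have hg : Continuous g := by fun_prop
  have happrox : ∀ ν : Measure E, IsFiniteMeasure ν →
      ∫⁻ u, ENNReal.ofReal (exp (b' * ‖u‖)) ∂ν ≤ K → dist (∫ u, f u ∂ν) (∫ u, g u ∂ν) < ε / 3 := by
    intro ν _ hν
    have hgi : Integrable g ν := (integrable_const |M * exp (b * R)|).mono'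
      hg.aestronglyMeasurable (ae_of_all _ fun u => abs_truncate_le _ _)
    rw [Real.dist_eq, ← integral_sub
      (integrable_of_abs_le_mul_exp hf.aestronglyMeasurable hfb hbb'.le hν hK_top) hgi]
    exact abs_integral_le_integral_abs.trans_lt
      ((integral_abs_sub_truncate_le hfb hb hbb'.le hν hK_top R).trans_lt hR)
  obtain ⟨N, hN⟩ := Metric.tendsto_atTop.1
    (hweak g hg ⟨_, fun u => abs_truncate_le _ _⟩) (ε / 3) (by positivity)
  refine ⟨N, fun n hn => ?_⟩
  calc dist (∫ u, f u ∂(μs n)) (∫ u, f u ∂μ)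
      ≤ dist (∫ u, f u ∂(μs n)) (∫ u, g u ∂(μs n)) + dist (∫ u, g u ∂(μs n)) (∫ u, g u ∂μ)
        + dist (∫ u, g u ∂μ) (∫ u, f u ∂μ) := dist_triangle4 _ _ _ _
    _ < ε / 3 + ε / 3 + ε / 3 := by
      gcongr
      · exact happrox _ inferInstance (hK n)
      · exact hN n hn
      · rw [dist_comm]; exact happrox _ inferInstance hK'
    _ = ε := by ring

/-- The tail suprema `D K = ⨆ i, |φ (K + i)|` are continuous, bounded and decrease to `0`; they
dominate `|φ k|` for `k ≥ K`, and `∫ D K dμs n → ∫ D K dμ`, which is small for large `K`. -/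
theorem tendsto_integral_abs_prod_of_abs_le
    (hweak : ∀ h : E → ℝ, Continuous h → (∃ M : ℝ, ∀ u : E, |h u| ≤ M) →
      Tendsto (fun n => ∫ u, h u ∂(μs n)) atTop (𝓝 (∫ u, h u ∂μ)))
    {φ : ℕ → E → ℝ} {c : ℝ} (hc : ∀ k u, |φ k u| ≤ c)
    (hlim : ∀ u, Tendsto (fun k => φ k u) atTop (𝓝 0))
    (hlip : ∀ x, ∃ L, ∃ s ∈ 𝓝 x, ∀ k, LipschitzOnWith L (φ k) s) :
    Tendsto (fun p : ℕ × ℕ => ∫ u, |φ p.1 u| ∂(μs p.2)) (atTop ×ˢ atTop) (𝓝 0) := by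
  set D : ℕ → E → ℝ := fun K u => ⨆ i, |φ (K + i) u|
  have hbdd : ∀ K u, BddAbove (range fun i => |φ (K + i) u|) :=
    fun K u => ⟨c, forall_mem_range.2 fun i => hc _ _⟩
  have hD_nonneg : ∀ K u, 0 ≤ D K u := fun K u => Real.iSup_nonneg fun i => abs_nonneg _
  have hD_abs_le : ∀ K u, |D K u| ≤ c := fun K u => by
    rw [abs_of_nonneg (hD_nonneg K u)]
    exact ciSup_le fun i => hc _ _
  have hD_cont : ∀ K, Continuous (D K) := fun K => continuous_iff_continuousAt.2 fun x => by
    obtain ⟨L, s, hs, hL⟩ := hlip x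
    have hL_abs : ∀ k, LipschitzOnWith L (fun u => |φ k u|) s := fun k => by
      simpa [Function.comp_def] using lipschitzWith_one_norm.comp_lipschitzOnWith (hL k)
    exact ((LipschitzOnWith.ciSup (fun i => hL_abs (K + i)) fun y _ => hbdd K y).continuousOn
      ).continuousAt hs
  have hD_int : Tendsto (fun K => ∫ u, D K u ∂μ) atTop (𝓝 0) := by
    simpa using tendsto_integral_of_dominated_convergence (fun _ => c)
      (fun K => (hD_cont K).aestronglyMeasurable) (integrable_const c)
      (fun K => ae_of_all _ (hD_abs_le K))
      (ae_of_all _ fun u => tendsto_iSup_abs_add_atTop (hlim u))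
  refine tendsto_order.2 ⟨fun a ha => Eventually.of_forall fun p =>
    ha.trans_le (integral_nonneg fun _ => abs_nonneg _), fun ε hε => ?_⟩
  obtain ⟨K, hK⟩ := (hD_int.eventually (gt_mem_nhds hε)).exists
  filter_upwards [(eventually_ge_atTop K).prod_mk
    ((hweak (D K) (hD_cont K) ⟨c, hD_abs_le K⟩).eventually (gt_mem_nhds hK))] with p ⟨hk, hn⟩
  refine lt_of_le_of_lt (integral_mono_of_nonneg (ae_of_all _ fun _ => abs_nonneg _)
    ((integrable_const c).mono' (hD_cont K).aestronglyMeasurable (ae_of_all _ (hD_abs_le K)))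
    (ae_of_all _ fun u => ?_)) hn
  simpa [Nat.add_sub_cancel' hk] using le_ciSup (hbdd K u) (p.1 - K)

theorem tendsto_integral_abs_prod_of_abs_le_mul_exp
    (hweak : ∀ h : E → ℝ, Continuous h → (∃ M : ℝ, ∀ u : E, |h u| ≤ M) →
      Tendsto (fun n => ∫ u, h u ∂(μs n)) atTop (𝓝 (∫ u, h u ∂μ)))
    {b b' : ℝ} {K : ℝ≥0∞} (hb : 0 ≤ b) (hbb' : b < b')
    (hK : ∀ n, ∫⁻ u, ENNReal.ofReal (exp (b' * ‖u‖)) ∂(μs n) ≤ K) (hK_top : K ≠ ∞)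
    {φ : ℕ → E → ℝ} {M : ℝ} (hφ : ∀ k u, |φ k u| ≤ M * exp (b * ‖u‖))
    (hlim : ∀ u, Tendsto (fun k => φ k u) atTop (𝓝 0))
    (hlip : ∀ x, ∃ L, ∃ s ∈ 𝓝 x, ∀ k, LipschitzOnWith L (φ k) s) :
    Tendsto (fun p : ℕ × ℕ => ∫ u, |φ p.1 u| ∂(μs p.2)) (atTop ×ˢ atTop) (𝓝 0) := by
  have hM : 0 ≤ M := nonneg_of_mul_nonneg_left ((abs_nonneg _).trans (hφ 0 0)) (exp_pos _)
  have hφ_cont : ∀ k, Continuous (φ k) := fun k => LocallyLipschitz.continuous fun x => by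
    obtain ⟨L, s, hs, hL⟩ := hlip x
    exact ⟨L, s, hs, hL k⟩
  refine tendsto_order.2 ⟨fun a ha => Eventually.of_forall fun p =>
    ha.trans_le (integral_nonneg fun _ => abs_nonneg _), fun ε hε => ?_⟩
  obtain ⟨R, hR⟩ := ((tendsto_mul_exp_neg_mul_atTop (sub_pos.2 hbb') M K.toReal).eventually
    (gt_mem_nhds (half_pos hε))).exists
  set c := M * exp (b * R)
  have hc : 0 ≤ c := by positivity
  have htrunc_zero : truncate c 0 = 0 := truncate_eq_self (by simpa using hc)
  have htrunc := tendsto_integral_abs_prod_of_abs_le hweak (φ := fun k u => truncate c (φ k u))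
    (fun k u => abs_truncate_le c _)
    (fun u => by
      simpa [Function.comp_def, htrunc_zero] using
        ((continuous_truncate c).tendsto 0).comp (hlim u))
    (fun x => by
      obtain ⟨L, s, hs, hL⟩ := hlip x
      exact ⟨1 * L, s, hs, fun k => (lipschitzWith_truncate c).comp_lipschitzOnWith (hL k)⟩)
  filter_upwards [htrunc.eventually (gt_mem_nhds (half_pos hε))] with ⟨k, n⟩ hkn
  have hint_trunc : Integrable (fun u => |truncate c (φ k u)|) (μs n) :=
    (integrable_const |c|).mono' (by fun_prop) (ae_of_all _ fun u => by
      simpa using abs_truncate_le c (φ k u))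
  have hint_tail : Integrable (fun u => |φ k u - truncate c (φ k u)|) (μs n) :=
    integrable_of_abs_le_mul_exp (by fun_prop)
      (fun u => (abs_abs _).trans_le ((abs_sub_truncate_le_abs hc _).trans (hφ k u)))
      hbb'.le (hK n) hK_top
  calc ∫ u, |φ k u| ∂(μs n)
      ≤ ∫ u, (|truncate c (φ k u)| + |φ k u - truncate c (φ k u)|) ∂(μs n) :=
        integral_mono_of_nonneg (ae_of_all _ fun _ => abs_nonneg _) (hint_trunc.add hint_tail)
          (ae_of_all _ fun u => by
            linarith [abs_sub_abs_le_abs_sub (φ k u) (truncate c (φ k u))])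
    _ = ∫ u, |truncate c (φ k u)| ∂(μs n) + ∫ u, |φ k u - truncate c (φ k u)| ∂(μs n) :=
        integral_add hint_trunc hint_tail
    _ < ε / 2 + ε / 2 := add_lt_add_of_lt_of_le hkn
        ((integral_abs_sub_truncate_le (hφ k) hb hbb'.le (hK n) hK_top R).trans hR.le)
    _ = ε := add_halves ε

end WeakConvergence

section Likelihood

variable {E F : Type*} [NormedAddCommGroup E] [NormedSpace ℝ E] [NormedAddCommGroup F]
  [NormedSpace ℝ F] (B : F →L[ℝ] F →L[ℝ] ℝ)

/-- `likelihood B (Ak k) (mk k)` is `Ξ_k` and `likelihood B A m` is `Ξ`. -/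
noncomputable def likelihood (T : E →L[ℝ] F) (w : F) (u : E) : ℝ :=
  exp (-(1 / 2) * ‖T u‖ ^ 2 + B (T u) w)

lemma likelihood_pos (T : E →L[ℝ] F) (w : F) (u : E) : 0 < likelihood B T w u := exp_pos _

@[fun_prop]
lemma continuous_likelihood (T : E →L[ℝ] F) (w : F) : Continuous (likelihood B T w) := by
  unfold likelihood
  fun_prop

lemma likelihood_le {T : E →L[ℝ] F} {w : F} {a c : ℝ} (hT : ‖T‖ ≤ a) (hw : ‖w‖ ≤ c) (u : E) :
    likelihood B T w u ≤ exp (‖B‖ * a * c * ‖u‖) := by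
  have ha : 0 ≤ a := (norm_nonneg _).trans hT
  have hB : B (T u) w ≤ ‖B‖ * a * c * ‖u‖ := calc
    B (T u) w ≤ ‖B‖ * ‖T u‖ * ‖w‖ := (le_abs_self _).trans (B.le_opNorm₂ _ _)
    _ ≤ ‖B‖ * (a * ‖u‖) * c := by gcongr; exact T.le_of_opNorm_le hT u
    _ = ‖B‖ * a * c * ‖u‖ := by ring
  exact exp_le_exp.2 (by nlinarith [sq_nonneg ‖T u‖])

lemma tendsto_likelihood {T : ℕ → E →L[ℝ] F} {T₀ : E →L[ℝ] F} {w : ℕ → F} {w₀ : F} {u : E}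
    (hT : Tendsto (fun k => T k u) atTop (𝓝 (T₀ u))) (hw : Tendsto w atTop (𝓝 w₀)) :
    Tendsto (fun k => likelihood B (T k) (w k) u) atTop (𝓝 (likelihood B T₀ w₀ u)) :=
  (continuous_exp.tendsto _).comp (((hT.norm.pow 2).const_mul _).add
    ((B.continuous₂.tendsto _).comp (hT.prodMk_nhds hw)))

lemma lipschitzOnWith_exp_Iic (β : ℝ) : LipschitzOnWith (Real.toNNReal (exp β)) exp (Iic β) :=
  LipschitzOnWith.of_dist_le' fun x hx y hy => by
    simpa [Real.dist_eq, Real.norm_eq_abs, abs_of_pos (exp_pos _)] using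
      (convex_Iic β).norm_image_sub_le_of_norm_deriv_le (f := exp)
        (fun z _ => differentiableAt_exp) (fun z hz => by simpa using exp_le_exp.2 hz) hy hx

lemma abs_norm_sq_sub_norm_sq_le {G : Type*} [SeminormedAddCommGroup G] {x y : G} {R : ℝ}
    (hx : ‖x‖ ≤ R) (hy : ‖y‖ ≤ R) : |‖x‖ ^ 2 - ‖y‖ ^ 2| ≤ 2 * R * ‖x - y‖ := by
  rw [sq_sub_sq, abs_mul, abs_of_nonneg (by positivity)]
  exact mul_le_mul (by linarith) (abs_norm_sub_norm_le x y) (abs_nonneg _)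
    (by linarith [norm_nonneg x])

lemma exists_lipschitzOnWith_likelihood (a c r : ℝ) : ∃ L, ∀ (T : E →L[ℝ] F) (w : F),
    ‖T‖ ≤ a → ‖w‖ ≤ c → LipschitzOnWith L (likelihood B T w) (closedBall 0 r) := by
  refine ⟨Real.toNNReal (exp (‖B‖ * a * c * r)) * Real.toNNReal (a ^ 2 * r + ‖B‖ * a * c),
    fun T w hT hw => ?_⟩
  have ha : 0 ≤ a := (norm_nonneg _).trans hT
  have hc : 0 ≤ c := (norm_nonneg _).trans hw
  set ψ : E → ℝ := fun u => -(1 / 2) * ‖T u‖ ^ 2 + B (T u) w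
  have hψ : LipschitzOnWith (Real.toNNReal (a ^ 2 * r + ‖B‖ * a * c)) ψ (closedBall 0 r) :=
    LipschitzOnWith.of_dist_le' fun u hu v hv => by
      rw [mem_closedBall_zero_iff] at hu hv
      rw [dist_eq_norm, dist_eq_norm, Real.norm_eq_abs]
      have hr : 0 ≤ r := (norm_nonneg u).trans hu
      have hTuv : ‖T u - T v‖ ≤ a * ‖u - v‖ := by
        rw [← map_sub]; exact T.le_of_opNorm_le hT _
      have hsq : |‖T u‖ ^ 2 - ‖T v‖ ^ 2| ≤ 2 * (a * r) * (a * ‖u - v‖) :=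
        (abs_norm_sq_sub_norm_sq_le (R := a * r) ((T.le_of_opNorm_le hT u).trans (by gcongr))
          ((T.le_of_opNorm_le hT v).trans (by gcongr))).trans (by gcongr)
      have hlin : |B (T u) w - B (T v) w| ≤ ‖B‖ * a * c * ‖u - v‖ := calc
        |B (T u) w - B (T v) w| = ‖B (T (u - v)) w‖ := by simp [Real.norm_eq_abs]
        _ ≤ ‖B‖ * ‖T (u - v)‖ * ‖w‖ := B.le_opNorm₂ _ _
        _ ≤ ‖B‖ * (a * ‖u - v‖) * c := by gcongr; exact T.le_of_opNorm_le hT _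
        _ = ‖B‖ * a * c * ‖u - v‖ := by ring
      calc |ψ u - ψ v| = |-(1 / 2) * (‖T u‖ ^ 2 - ‖T v‖ ^ 2) + (B (T u) w - B (T v) w)| := by
            simp only [ψ]; ring_nf
        _ ≤ 1 / 2 * |‖T u‖ ^ 2 - ‖T v‖ ^ 2| + |B (T u) w - B (T v) w| := by
            refine (abs_add_le _ _).trans_eq ?_
            rw [abs_mul]; norm_num
        _ ≤ (a ^ 2 * r + ‖B‖ * a * c) * ‖u - v‖ := by nlinarith
  have hψ_le : MapsTo ψ (closedBall 0 r) (Iic (‖B‖ * a * c * r)) := fun u hu =>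
    (exp_le_exp.1 (likelihood_le B hT hw u)).trans (by gcongr; exact mem_closedBall_zero_iff.1 hu)
  exact (lipschitzOnWith_exp_Iic _).comp hψ hψ_le

lemma integrable_likelihood [MeasurableSpace E] [OpensMeasurableSpace E] {ν : Measure E}
    {T : E →L[ℝ] F} {w : F} {a c b : ℝ} {K : ℝ≥0∞} (hT : ‖T‖ ≤ a) (hw : ‖w‖ ≤ c)
    (hb : ‖B‖ * a * c ≤ b) (hK : ∫⁻ u, ENNReal.ofReal (exp (b * ‖u‖)) ∂ν ≤ K) (hK_top : K ≠ ∞) :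
    Integrable (likelihood B T w) ν :=
  integrable_of_abs_le_mul_exp (M := 1) (by fun_prop) (fun u => by
    rw [abs_of_pos (likelihood_pos B T w u), one_mul]
    exact likelihood_le B hT hw u) hb hK hK_top

end Likelihood

lemma abs_integral_mul_sub_integral_mul_le {α : Type*} [MeasurableSpace α] {ν : Measure α}
    {g f₁ f₂ : α → ℝ} {M : ℝ} (hg : AEStronglyMeasurable g ν) (hgb : ∀ u, |g u| ≤ M)
    (hf₁ : Integrable f₁ ν) (hf₂ : Integrable f₂ ν) :
    |∫ u, g u * f₁ u ∂ν - ∫ u, g u * f₂ u ∂ν| ≤ M * ∫ u, |f₁ u - f₂ u| ∂ν := by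
  have hgb' : ∀ᵐ u ∂ν, ‖g u‖ ≤ M := ae_of_all _ hgb
  rw [← integral_sub (hf₁.bdd_mul hg hgb') (hf₂.bdd_mul hg hgb'), ← integral_const_mul]
  refine abs_integral_le_integral_abs.trans (integral_mono_of_nonneg
    (ae_of_all _ fun _ => abs_nonneg _) ((hf₁.sub hf₂).abs.const_mul M) (ae_of_all _ fun u => ?_))
  simp only [← mul_sub, abs_mul]
  exact mul_le_mul_of_nonneg_right (hgb u) (abs_nonneg _)

theorem tendsto_integral_abs_likelihood_sub {E F : Type*} [NormedAddCommGroup E]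
    [NormedSpace ℝ E] [MeasurableSpace E] [OpensMeasurableSpace E] [NormedAddCommGroup F]
    [NormedSpace ℝ F] (B : F →L[ℝ] F →L[ℝ] ℝ)
    {μs : ℕ → Measure E} {μ : Measure E} [∀ n, IsFiniteMeasure (μs n)] [IsFiniteMeasure μ]
    (hweak : ∀ h : E → ℝ, Continuous h → (∃ M : ℝ, ∀ u : E, |h u| ≤ M) →
      Tendsto (fun n => ∫ u, h u ∂(μs n)) atTop (𝓝 (∫ u, h u ∂μ)))
    {A : E →L[ℝ] F} {Ak : ℕ → E →L[ℝ] F} {a : ℝ} (hAk : ∀ k, ‖Ak k‖ ≤ a) (hA : ‖A‖ ≤ a)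
    (hA_tendsto : ∀ u, Tendsto (fun k => Ak k u) atTop (𝓝 (A u)))
    {m : F} {mk : ℕ → F} {c : ℝ} (hmk : ∀ k, ‖mk k‖ ≤ c) (hm_le : ‖m‖ ≤ c)
    (hm : Tendsto mk atTop (𝓝 m)) {b : ℝ} {K : ℝ≥0∞} (hb : ‖B‖ * a * c < b)
    (hK : ∀ n, ∫⁻ u, ENNReal.ofReal (exp (b * ‖u‖)) ∂(μs n) ≤ K) (hK_top : K ≠ ∞) :
    Tendsto (fun p : ℕ × ℕ =>
      ∫ u, |likelihood B (Ak p.1) (mk p.1) u - likelihood B A m u| ∂(μs p.2))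
      (atTop ×ˢ atTop) (𝓝 0) := by
  have ha : 0 ≤ a := (norm_nonneg _).trans hA
  have hc : 0 ≤ c := (norm_nonneg _).trans hm_le
  refine tendsto_integral_abs_prod_of_abs_le_mul_exp hweak (by positivity) hb hK hK_top (M := 1)
    (φ := fun k u => likelihood B (Ak k) (mk k) u - likelihood B A m u) (fun k u => ?_)
    (fun u => by
      simpa using (tendsto_likelihood B (hA_tendsto u) hm).sub_const (likelihood B A m u))
    (fun x => ?_)
  · have := likelihood_le B (hAk k) (hmk k) u
    have := likelihood_le B hA hm_le u
    have := likelihood_pos B (Ak k) (mk k) u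
    have := likelihood_pos B A m u
    rw [one_mul, abs_sub_le_iff]
    constructor <;> linarith
  · obtain ⟨L, hL⟩ := exists_lipschitzOnWith_likelihood (E := E) B a c (‖x‖ + 1)
    exact ⟨L + L, closedBall 0 (‖x‖ + 1), closedBall_mem_nhds_of_mem (by simp),
      fun k => (hL _ _ (hAk k) (hmk k)).sub (hL _ _ hA hm_le)⟩

theorem tendsto_integral_mul_likelihood {E F : Type*} [NormedAddCommGroup E] [NormedSpace ℝ E]
    [MeasurableSpace E] [OpensMeasurableSpace E] [NormedAddCommGroup F] [NormedSpace ℝ F]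
    (B : F →L[ℝ] F →L[ℝ] ℝ)
    {μs : ℕ → Measure E} {μ : Measure E} [∀ n, IsFiniteMeasure (μs n)] [IsFiniteMeasure μ]
    (hweak : ∀ h : E → ℝ, Continuous h → (∃ M : ℝ, ∀ u : E, |h u| ≤ M) →
      Tendsto (fun n => ∫ u, h u ∂(μs n)) atTop (𝓝 (∫ u, h u ∂μ)))
    {A : E →L[ℝ] F} {Ak : ℕ → E →L[ℝ] F} {a : ℝ} (hAk : ∀ k, ‖Ak k‖ ≤ a) (hA : ‖A‖ ≤ a)
    (hA_tendsto : ∀ u, Tendsto (fun k => Ak k u) atTop (𝓝 (A u)))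
    {m : F} {mk : ℕ → F} {c : ℝ} (hmk : ∀ k, ‖mk k‖ ≤ c) (hm_le : ‖m‖ ≤ c)
    (hm : Tendsto mk atTop (𝓝 m)) {b : ℝ} {K : ℝ≥0∞} (hb : ‖B‖ * a * c < b)
    (hK : ∀ n, ∫⁻ u, ENNReal.ofReal (exp (b * ‖u‖)) ∂(μs n) ≤ K)
    (hK' : ∫⁻ u, ENNReal.ofReal (exp (b * ‖u‖)) ∂μ ≤ K) (hK_top : K ≠ ∞)
    {g : E → ℝ} {M : ℝ} (hg : Continuous g) (hgb : ∀ u, |g u| ≤ M) :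
    Tendsto (fun p : ℕ × ℕ => ∫ u, g u * likelihood B (Ak p.1) (mk p.1) u ∂(μs p.2))
      (atTop ×ˢ atTop) (𝓝 (∫ u, g u * likelihood B A m u ∂μ)) := by
  have hM : 0 ≤ M := (abs_nonneg _).trans (hgb 0)
  have hB : 0 ≤ ‖B‖ * a * c := by
    have := (norm_nonneg _).trans hA
    have := (norm_nonneg _).trans hm_le
    positivity
  have hint : ∀ {n T w}, ‖T‖ ≤ a → ‖w‖ ≤ c → Integrable (likelihood B T w) (μs n) :=
    fun hT hw => integrable_likelihood B hT hw hb.le (hK _) hK_top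
  have hlimit : Tendsto (fun n => ∫ u, g u * likelihood B A m u ∂(μs n)) atTop
      (𝓝 (∫ u, g u * likelihood B A m u ∂μ)) :=
    tendsto_integral_of_abs_le_mul_exp hweak hB hb hK hK' hK_top (by fun_prop) fun u => by
      rw [abs_mul, abs_of_pos (likelihood_pos B A m u)]
      exact mul_le_mul (hgb u) (likelihood_le B hA hm_le u) (exp_pos _).le hM
  have hclose : Tendsto (fun p : ℕ × ℕ => ∫ u, g u * likelihood B (Ak p.1) (mk p.1) u ∂(μs p.2)
      - ∫ u, g u * likelihood B A m u ∂(μs p.2)) (atTop ×ˢ atTop) (𝓝 0) :=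
    squeeze_zero_norm (fun p => abs_integral_mul_sub_integral_mul_le hg.aestronglyMeasurable hgb
      (hint (hAk p.1) (hmk p.1)) (hint hA hm_le)) (by
        simpa using (tendsto_integral_abs_likelihood_sub B hweak hAk hA hA_tendsto hmk hm_le hm
          hb hK hK_top).const_mul M)
  simpa using hclose.add (hlimit.comp tendsto_snd)

theorem statement3_general
    {E : Type*} [NormedAddCommGroup E] [InnerProductSpace ℝ E]
    [MeasurableSpace E] [BorelSpace E]
    {F : Type*} [NormedAddCommGroup F] [InnerProductSpace ℝ F]
    (μs : ℕ → Measure E) (μ : Measure E)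
    [∀ n, IsProbabilityMeasure (μs n)] [IsProbabilityMeasure μ]
    (hweak : ∀ h : E → ℝ, Continuous h → (∃ M : ℝ, ∀ u : E, |h u| ≤ M) →
      Tendsto (fun n => ∫ u, h u ∂(μs n)) atTop (nhds (∫ u, h u ∂μ)))
    (C : ℝ → ℝ)
    (hmom : ∀ b > 0, ∀ n : ℕ,
      ∫⁻ u, ENNReal.ofReal (Real.exp (b * ‖u‖)) ∂(μs n) ≤ ENNReal.ofReal (C b))
    (hmom' : ∀ b > 0,
      ∫⁻ u, ENNReal.ofReal (Real.exp (b * ‖u‖)) ∂μ ≤ ENNReal.ofReal (C b))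
    (A : E →L[ℝ] F) (Ak : ℕ → E →L[ℝ] F)
    (hAbd : ∃ CA : ℝ, ∀ k, ‖Ak k‖ ≤ CA)
    (hAconv : ∀ u : E, Tendsto (fun k => ‖Ak k u - A u‖) atTop (nhds 0))
    (m : F) (mk : ℕ → F) (hm : Tendsto mk atTop (nhds m))
    (B : F →L[ℝ] F →L[ℝ] ℝ) :
    ∀ h : E → ℝ, Continuous h → (∃ M : ℝ, ∀ u : E, |h u| ≤ M) →
      Tendsto
        (fun p : ℕ × ℕ =>
          (∫ u, h u * Real.exp (-(1/2) * ‖Ak p.1 u‖ ^ 2 + B (Ak p.1 u) (mk p.1)) ∂(μs p.2)) /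
            ∫ u, Real.exp (-(1/2) * ‖Ak p.1 u‖ ^ 2 + B (Ak p.1 u) (mk p.1)) ∂(μs p.2))
        (atTop ×ˢ atTop)
        (nhds ((∫ u, h u * Real.exp (-(1/2) * ‖A u‖ ^ 2 + B (A u) m) ∂μ) /
          ∫ u, Real.exp (-(1/2) * ‖A u‖ ^ 2 + B (A u) m) ∂μ)) := by
  intro h hh ⟨M, hM⟩
  obtain ⟨a, ha⟩ := hAbd
  obtain ⟨c, hc⟩ := hm.norm.bddAbove_range
  have hA_tendsto : ∀ u, Tendsto (fun k => Ak k u) atTop (𝓝 (A u)) :=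
    fun u => tendsto_iff_norm_sub_tendsto_zero.2 (hAconv u)
  have hAk : ∀ k, ‖Ak k‖ ≤ max a ‖A‖ := fun k => (ha k).trans (le_max_left _ _)
  have hmk : ∀ k, ‖mk k‖ ≤ max c ‖m‖ := fun k => (hc (mem_range_self k)).trans (le_max_left _ _)
  set b := ‖B‖ * max a ‖A‖ * max c ‖m‖ + 1
  have hb_pos : 0 < b := by positivity
  have hlim {g : E → ℝ} {Mg : ℝ} (hg : Continuous g) (hgb : ∀ u, |g u| ≤ Mg) :=
    tendsto_integral_mul_likelihood B hweak hAk (le_max_right _ _) hA_tendsto hmk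
      (le_max_right _ _) hm (lt_add_one _) (hmom b hb_pos) (hmom' b hb_pos) ENNReal.ofReal_ne_top
      hg hgb
  have hden : 0 < ∫ u, likelihood B A m u ∂μ :=
    integral_exp_pos (integrable_likelihood B (le_max_right a ‖A‖) (le_max_right c ‖m‖)
      (lt_add_one _).le (hmom' b hb_pos) ENNReal.ofReal_ne_top)
  have hratio := (hlim hh hM).div (hlim continuous_const fun _ => abs_one.le)
    (by simpa using hden.ne')
  simp only [one_mul] at hratio
  exact hratio

/-- Weak convergence of the posterior distributions: in the setting
of uniformly discretized priors `(μs n), μ` with exponential weights, strongly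
convergent uniformly bounded operators `Ak k → A`, measurements `mk k → m`, and the
Gaussian likelihood factors `Ξ_k(u) = exp(−½‖Ak k u‖² + B (Ak k u) (mk k))`,
`Ξ(u) = exp(−½‖A u‖² + B (A u) m)`, for every bounded continuous `h : E → ℝ` the
posterior expectations `(∫ h Ξ_k dμs n)/(∫ Ξ_k dμs n)` converge, as `k, n → ∞`
jointly, to `(∫ h Ξ dμ)/(∫ Ξ dμ)`. -/
theorem statement3
    {E : Type*} [NormedAddCommGroup E] [InnerProductSpace ℝ E] [CompleteSpace E]
    [SecondCountableTopology E] [MeasurableSpace E] [BorelSpace E]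
    {F : Type*} [NormedAddCommGroup F] [InnerProductSpace ℝ F] [CompleteSpace F]
    [SecondCountableTopology F]
    (μs : ℕ → Measure E) (μ : Measure E)
    [∀ n, IsProbabilityMeasure (μs n)] [IsProbabilityMeasure μ]
    (hweak : ∀ h : E → ℝ, Continuous h → (∃ M : ℝ, ∀ u : E, |h u| ≤ M) →
      Tendsto (fun n => ∫ u, h u ∂(μs n)) atTop (nhds (∫ u, h u ∂μ)))
    (C : ℝ → ℝ) (hC : ∀ b > 0, 0 < C b)
    (hmom : ∀ b > 0, ∀ n : ℕ,
      ∫⁻ u, ENNReal.ofReal (Real.exp (b * ‖u‖)) ∂(μs n) ≤ ENNReal.ofReal (C b))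
    (hmom' : ∀ b > 0,
      ∫⁻ u, ENNReal.ofReal (Real.exp (b * ‖u‖)) ∂μ ≤ ENNReal.ofReal (C b))
    (A : E →L[ℝ] F) (Ak : ℕ → E →L[ℝ] F)
    (hAbd : ∃ CA : ℝ, ∀ k, ‖Ak k‖ ≤ CA)
    (hAconv : ∀ u : E, Tendsto (fun k => ‖Ak k u - A u‖) atTop (nhds 0))
    (m : F) (mk : ℕ → F) (hm : Tendsto mk atTop (nhds m))
    (B : F →L[ℝ] F →L[ℝ] ℝ) :
    ∀ h : E → ℝ, Continuous h → (∃ M : ℝ, ∀ u : E, |h u| ≤ M) →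
      Tendsto
        (fun p : ℕ × ℕ =>
          (∫ u, h u * Real.exp (-(1/2) * ‖Ak p.1 u‖ ^ 2 + B (Ak p.1 u) (mk p.1)) ∂(μs p.2)) /
            ∫ u, Real.exp (-(1/2) * ‖Ak p.1 u‖ ^ 2 + B (Ak p.1 u) (mk p.1)) ∂(μs p.2))
        (atTop ×ˢ atTop)
        (nhds ((∫ u, h u * Real.exp (-(1/2) * ‖A u‖ ^ 2 + B (A u) m) ∂μ) /
          ∫ u, Real.exp (-(1/2) * ‖A u‖ ^ 2 + B (A u) m) ∂μ)) :=
  statement3_general μs μ hweak C hmom hmom' A Ak hAbd hAconv m mk hm B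
end

section
/- Let ℓ ∈ ℕ, let ρ : Fin ℓ → ℝ≥0 be variances, and let μ be the product measure on (Fin ℓ → ℝ) of the centered Gaussian measures gaussianReal 0 (ρ j). Let a > 0 satisfy 4a ∑_j ρ_j < 1. Then ∫ exp(a ∑_{j} x_j²) dμ(x) ≤ exp(2a ∑_j ρ_j). -/
/-!
The integrand factorizes over the coordinates, so the integral is the product of the
one-dimensional integrals `∫ exp (a x²) d𝒩(0, v) = (1 - 2av)^{-1/2}`, obtained by absorbing
`exp (a x²)` into the Gaussian density. When `0 ≤ av ≤ 1/4` we have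
`(1 - 2av)⁻¹ ≤ 1 + 4av ≤ exp (4av)`, so each factor is at most `exp (2av)`.
-/

open MeasureTheory ProbabilityTheory Real

lemma inv_sqrt_one_sub_two_mul_le_exp {t : ℝ} (ht : 0 ≤ t) (ht' : 4 * t ≤ 1) :
    (√(1 - 2 * t))⁻¹ ≤ exp (2 * t) := by
  have hpos : 0 < 1 - 2 * t := by linarith
  rw [← sqrt_inv, sqrt_le_iff, sq, ← exp_add]
  refine ⟨(exp_pos _).le, ?_⟩
  calc (1 - 2 * t)⁻¹ ≤ 4 * t + 1 := by
        rw [inv_le_iff_one_le_mul₀ hpos]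
        nlinarith
    _ ≤ exp (2 * t + 2 * t) := by
        rw [show 2 * t + 2 * t = 4 * t by ring]
        exact add_one_le_exp _

lemma integral_exp_mul_sq_gaussianReal (v : NNReal) {a : ℝ} (h : 2 * a * v < 1) :
    ∫ x, exp (a * x ^ 2) ∂(gaussianReal 0 v) = (√(1 - 2 * a * v))⁻¹ := by
  rcases eq_or_ne v 0 with rfl | hv
  · simp
  have hv' : (0 : ℝ) < v := by positivity
  have hpos : 0 < 1 - 2 * a * v := by linarith
  have hdensity : ∀ x : ℝ, gaussianPDFReal 0 v x • exp (a * x ^ 2)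
      = (√(2 * π * v))⁻¹ * exp (-((1 - 2 * a * v) / (2 * v)) * x ^ 2) := by
    intro x
    rw [gaussianPDFReal, smul_eq_mul, mul_assoc, ← exp_add]
    congr 2
    field_simp
    ring
  simp_rw [integral_gaussianReal_eq_integral_smul hv, hdensity, integral_const_mul,
    integral_gaussian]
  rw [div_div_eq_mul_div, sqrt_div' _ hpos.le]
  field_simp

lemma integral_exp_mul_sq_gaussianReal_le (v : NNReal) {a : ℝ} (ha : 0 ≤ a)
    (h : 4 * a * v ≤ 1) :
    ∫ x, exp (a * x ^ 2) ∂(gaussianReal 0 v) ≤ exp (2 * a * v) := by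
  rw [integral_exp_mul_sq_gaussianReal v (by nlinarith [v.coe_nonneg]), mul_assoc]
  exact inv_sqrt_one_sub_two_mul_le_exp (by positivity) (by linarith)

/-- For a centered Gaussian random vector on `Fin ℓ → ℝ` with
independent coordinates of variances `ρ j` (product of `gaussianReal 0 (ρ j)`),
and `a > 0` with `4a ∑ ρ j < 1`, one has
`∫ exp (a ∑ x_j²) dμ ≤ exp (2a ∑ ρ j)`. -/
theorem statement8 (ℓ : ℕ) (ρ : Fin ℓ → NNReal) (a : ℝ) (ha : 0 < a)
    (hsmall : 4 * a * ∑ j, (ρ j : ℝ) < 1) :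
    ∫ x : Fin ℓ → ℝ, Real.exp (a * ∑ j, x j ^ 2)
        ∂(Measure.pi (fun j => gaussianReal 0 (ρ j))) ≤
      Real.exp (2 * a * ∑ j, (ρ j : ℝ)) := by
  simp_rw [Finset.mul_sum, exp_sum]
  rw [integral_fintype_prod_eq_prod (fun _ y => exp (a * y ^ 2))]
  refine Finset.prod_le_prod (fun j _ => integral_nonneg fun _ => (exp_pos _).le)
    fun j _ => integral_exp_mul_sq_gaussianReal_le _ ha.le ?_
  have hρj : (ρ j : ℝ) ≤ ∑ i, (ρ i : ℝ) :=
    Finset.single_le_sum (fun i _ => (ρ i).coe_nonneg) (Finset.mem_univ j)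
  nlinarith
end

section
/- Let ℓ ∈ ℕ, let m : Fin ℓ → ℝ be means and ρ : Fin ℓ → ℝ≥0 variances, and let μ be the product measure on (Fin ℓ → ℝ) of the Gaussian measures gaussianReal (m j) (ρ j). Let b > 0 and let a > 0 satisfy 4a ∑_j ρ_j < 1. Then ∫ exp(b √(∑_j x_j²)) dμ(x) ≤ exp(b √(∑_j m_j²)) · exp(b²/(4a)) · exp(2a ∑_j ρ_j). -/
/-!
By the triangle inequality and AM-GM, `b ‖x‖ ≤ b ‖m‖ + b² / (4a) + a ‖x - m‖²`, so the exponential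
moment is at most `exp (b ‖m‖ + b² / (4a))` times `∫ exp (a ‖x - m‖²)`, which factorizes over the
independent coordinates. Each factor is the Gaussian integral `(1 - 2 a ρ_j)^(-1/2)`, and
`(1 - t)^(-1/2) ≤ exp t` for `0 ≤ t ≤ 1/2`.
-/

open MeasureTheory ProbabilityTheory Real
open Finset
open scoped NNReal

lemma mul_norm_le_mul_norm_add_sq_norm_sub {E : Type*} [SeminormedAddCommGroup E] (x m : E)
    (b : ℝ) {a : ℝ} (ha : 0 < a) :
    b * ‖x‖ ≤ b * ‖m‖ + b ^ 2 / (4 * a) + a * ‖x - m‖ ^ 2 := by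
  have htri : b * (‖x‖ - ‖m‖) ≤ |b| * ‖x - m‖ := by
    calc b * (‖x‖ - ‖m‖) ≤ |b| * |‖x‖ - ‖m‖| := by rw [← abs_mul]; exact le_abs_self _
      _ ≤ |b| * ‖x - m‖ := by gcongr; exact abs_norm_sub_norm_le x m
  have hamgm : b ^ 2 / (4 * a) + a * ‖x - m‖ ^ 2 - |b| * ‖x - m‖
      = (|b| - 2 * a * ‖x - m‖) ^ 2 / (4 * a) := by
    rw [← sq_abs b]
    field_simp
    ring
  have : 0 ≤ (|b| - 2 * a * ‖x - m‖) ^ 2 / (4 * a) := by positivity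
  linarith

lemma mul_sqrt_sum_sq_le {ι : Type*} [Fintype ι] (x m : ι → ℝ) (b : ℝ) {a : ℝ} (ha : 0 < a) :
    b * √(∑ i, x i ^ 2) ≤ b * √(∑ i, m i ^ 2) + b ^ 2 / (4 * a) + a * ∑ i, (x i - m i) ^ 2 := by
  have hsq : √(∑ i, (x i - m i) ^ 2) ^ 2 = ∑ i, (x i - m i) ^ 2 := sq_sqrt (by positivity)
  simpa [← WithLp.toLp_sub, EuclideanSpace.norm_eq, hsq]
    using mul_norm_le_mul_norm_add_sq_norm_sub (WithLp.toLp 2 x) (WithLp.toLp 2 m) b ha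

lemma integral_exp_mul_sq_sub_gaussianReal (μ : ℝ) (v : ℝ≥0) {a : ℝ} (h : 2 * a * v < 1) :
    ∫ x, exp (a * (x - μ) ^ 2) ∂gaussianReal μ v = (√(1 - 2 * a * v))⁻¹ := by
  rcases eq_or_ne v 0 with rfl | hv
  · simp [gaussianReal_zero_var]
  set c := (2 * (v : ℝ))⁻¹ - a with hc_def
  have hc : 2 * v * c = 1 - 2 * a * v := by rw [hc_def]; field_simp
  have hc_pos : 0 < c := by nlinarith
  have hdens : ∀ x, gaussianPDFReal μ v x • exp (a * (x - μ) ^ 2)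
      = (√(2 * π * v))⁻¹ * exp (-c * (x - μ) ^ 2) := by
    intro x
    rw [gaussianPDFReal, smul_eq_mul, mul_assoc, ← exp_add, hc_def]
    congr 2
    field_simp
    ring
  simp_rw [integral_gaussianReal_eq_integral_smul hv, hdens]
  rw [integral_const_mul, integral_sub_right_eq_self (fun x => exp (-c * x ^ 2)) μ,
    integral_gaussian, ← Real.sqrt_inv, ← Real.sqrt_mul (by positivity), ← hc, ← Real.sqrt_inv]
  congr 1
  field_simp

lemma inv_sqrt_one_sub_le_exp {t : ℝ} (h0 : 0 ≤ t) (h1 : t ≤ 1 / 2) : (√(1 - t))⁻¹ ≤ exp t := by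
  rw [← Real.sqrt_inv, ← sqrt_sq (exp_pos t).le, ← exp_nat_mul]
  refine sqrt_le_sqrt ?_
  calc (1 - t)⁻¹ ≤ 1 + 2 * t := by
        rw [inv_le_iff_one_le_mul₀ (by linarith)]; nlinarith
    _ ≤ exp (2 * t) := by linarith [add_one_le_exp (2 * t)]

theorem statement10_general (ℓ : ℕ) (m : Fin ℓ → ℝ) (ρ : Fin ℓ → NNReal)
    (b : ℝ) (a : ℝ) (ha : 0 < a)
    (hsmall : 4 * a * ∑ j, (ρ j : ℝ) < 1) :
    ∫ x : Fin ℓ → ℝ, Real.exp (b * Real.sqrt (∑ j, x j ^ 2))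
        ∂(Measure.pi (fun j => gaussianReal (m j) (ρ j))) ≤
      Real.exp (b * Real.sqrt (∑ j, m j ^ 2)) * Real.exp (b ^ 2 / (4 * a)) *
        Real.exp (2 * a * ∑ j, (ρ j : ℝ)) := by
  set C := exp (b * √(∑ j, m j ^ 2)) * exp (b ^ 2 / (4 * a)) with hC
  have hρ (j : Fin ℓ) : 2 * a * ρ j ≤ 1 / 2 := by
    have := single_le_sum (fun i _ ↦ (ρ i).coe_nonneg) (mem_univ j)
    nlinarith
  have hmoment (j : Fin ℓ) : ∫ x, exp (a * (x - m j) ^ 2) ∂gaussianReal (m j) (ρ j)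
      = (√(1 - 2 * a * ρ j))⁻¹ :=
    integral_exp_mul_sq_sub_gaussianReal _ _ (by linarith [hρ j])
  have hint (j : Fin ℓ) : Integrable (fun x ↦ exp (a * (x - m j) ^ 2)) (gaussianReal (m j) (ρ j)) :=
    .of_integral_ne_zero <| by
      rw [hmoment]
      exact (inv_pos.2 (sqrt_pos.2 (by linarith [hρ j]))).ne'
  have hpt (x : Fin ℓ → ℝ) : exp (b * √(∑ j, x j ^ 2)) ≤ C * ∏ j, exp (a * (x j - m j) ^ 2) := by
    rw [hC, ← exp_sum, ← mul_sum, ← exp_add, ← exp_add]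
    exact exp_le_exp.2 (mul_sqrt_sum_sq_le x m b ha)
  calc _ ≤ ∫ x, C * ∏ j, exp (a * (x j - m j) ^ 2) ∂Measure.pi fun j ↦ gaussianReal (m j) (ρ j) :=
        integral_mono_of_nonneg (ae_of_all _ fun _ ↦ (exp_pos _).le)
          ((Integrable.fintype_prod hint).const_mul C) (ae_of_all _ hpt)
    _ = C * ∏ j, (√(1 - 2 * a * ρ j))⁻¹ := by
        rw [integral_const_mul, integral_fintype_prod_eq_prod fun j x ↦ exp (a * (x - m j) ^ 2)]
        simp_rw [hmoment]
    _ ≤ C * ∏ j, exp (2 * a * ρ j) := by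
        gcongr with j
        exact inv_sqrt_one_sub_le_exp (by positivity) (hρ j)
    _ = _ := by rw [← exp_sum, ← mul_sum]

/-- For a Gaussian random vector on `Fin ℓ → ℝ` with independent
coordinates of means `m j` and variances `ρ j` (product of `gaussianReal (m j) (ρ j)`),
`b > 0` and `a > 0` with `4a ∑ ρ j < 1`, the exponential moment of the Euclidean norm
satisfies `∫ exp (b ‖x‖) dμ ≤ exp (b ‖m‖) · exp (b²/(4a)) · exp (2a ∑ ρ j)`. -/
theorem statement10 (ℓ : ℕ) (m : Fin ℓ → ℝ) (ρ : Fin ℓ → NNReal)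
    (b : ℝ) (hb : 0 < b) (a : ℝ) (ha : 0 < a)
    (hsmall : 4 * a * ∑ j, (ρ j : ℝ) < 1) :
    ∫ x : Fin ℓ → ℝ, Real.exp (b * Real.sqrt (∑ j, x j ^ 2))
        ∂(Measure.pi (fun j => gaussianReal (m j) (ρ j))) ≤
      Real.exp (b * Real.sqrt (∑ j, m j ^ 2)) * Real.exp (b ^ 2 / (4 * a)) *
        Real.exp (2 * a * ∑ j, (ρ j : ℝ)) :=
  statement10_general ℓ m ρ b a ha hsmall
end

section
/- Let ε > 0, α ∈ (0,1], C ≥ 0. Let v : ℝ → ℝ be continuous on [0,1], and for each n ∈ ℕ let v_n : ℝ → ℝ satisfy |v_n(x) − v_n(y)| ≤ C|x − y|^α for all x, y ∈ [0,1]. Assume sup_{x∈[0,1]} |v_n(x) − v(x)| → 0 as n → ∞. For N ≥ 1 define the averaging operator (Q_N g)(x) = N ∫_{⌊Nx⌋/N}^{(⌊Nx⌋+1)/N} g(y) dy. Then sup_{x ∈ [0,1)} | (ε² + v(x)²)^{−1} − (ε² + (Q_{2^n} v_n)(x)²)^{−1} | → 0 as n → ∞. -/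
open MeasureTheory Filter Real

/-- The averaging operator: `Qavg N g` is the piecewise-constant function whose value
at `x` is the average `N ∫_{⌊Nx⌋/N}^{(⌊Nx⌋+1)/N} g(y) dy` of `g` over the dyadic-type
interval of length `1/N` containing `x`. -/
noncomputable def Qavg (N : ℕ) (g : ℝ → ℝ) (x : ℝ) : ℝ :=
  (N : ℝ) * ∫ y in ((⌊(N : ℝ) * x⌋ : ℝ) / N)..(((⌊(N : ℝ) * x⌋ : ℝ) + 1) / N), g y

/-!
For `x ∈ [0,1)`, `Q_N g x` is the mean of `g` over an interval of length `1/N` containing `x`,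
so an `α`-Hölder `g` with constant `C` satisfies `|Q_N g x - g x| ≤ C N^(-α)`. With the uniform
Hölder constant this gives `Q_{2^n} v_n → v` uniformly on `[0,1)`, and composing with the map
`t ↦ (ε² + t²)⁻¹`, which is `ε⁻³`-Lipschitz, preserves uniform convergence.
-/

open Topology

lemma continuousOn_of_abs_sub_le_rpow {s : Set ℝ} {C α : ℝ} (hα : 0 < α) {g : ℝ → ℝ}
    (hg : ∀ x ∈ s, ∀ y ∈ s, |g x - g y| ≤ C * |x - y| ^ α) :
    ContinuousOn g s := by
  intro x hx
  rw [ContinuousWithinAt, tendsto_iff_dist_tendsto_zero]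
  have hmod : Tendsto (fun y => C * |y - x| ^ α) (𝓝[s] x) (𝓝 0) := by
    have hcont : Continuous fun y : ℝ => C * |y - x| ^ α :=
      ((continuous_abs.comp (continuous_id.sub continuous_const)).rpow_const
        fun _ => Or.inr hα.le).const_mul C
    simpa [Real.zero_rpow hα.ne'] using (hcont.tendsto x).mono_left nhdsWithin_le_nhds
  exact squeeze_zero' (Eventually.of_forall fun _ => dist_nonneg)
    (eventually_nhdsWithin_of_forall fun y hy => hg y hy x hx) hmod

theorem TendstoUniformlyOn.of_dist_le {ι α β : Type*} [PseudoMetricSpace β] {l : Filter ι}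
    {s : Set α} {F G : ι → α → β} {f : α → β} {δ : ι → ℝ}
    (hF : TendstoUniformlyOn F f l s) (hδ : Tendsto δ l (𝓝 0))
    (hGF : ∀ᶠ n in l, ∀ x ∈ s, dist (G n x) (F n x) ≤ δ n) :
    TendstoUniformlyOn G f l s := by
  rw [Metric.tendstoUniformlyOn_iff] at hF ⊢
  intro r hr
  filter_upwards [hF (r / 2) (half_pos hr), hδ.eventually_lt_const (half_pos hr), hGF]
    with n hFn hδn hGFn x hx
  calc dist (f x) (G n x) ≤ dist (f x) (F n x) + dist (G n x) (F n x) := dist_triangle_right _ _ _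
    _ < r / 2 + r / 2 := add_lt_add_of_lt_of_le (hFn x hx) ((hGFn x hx).trans hδn.le)
    _ = r := add_halves r

lemma abs_inv_mul_integral_sub_le {g : ℝ → ℝ} {a b c M : ℝ} (hab : a ≠ b)
    (hg : IntervalIntegrable g volume a b) (hM : ∀ y ∈ Set.uIoc a b, |g y - c| ≤ M) :
    |(b - a)⁻¹ * (∫ y in a..b, g y) - c| ≤ M := by
  have hba : 0 < |b - a| := abs_pos.mpr (sub_ne_zero.mpr hab.symm)
  have hsub : (b - a)⁻¹ * (∫ y in a..b, g y) - c = (b - a)⁻¹ * ∫ y in a..b, (g y - c) := by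
    rw [intervalIntegral.integral_sub hg intervalIntegrable_const, intervalIntegral.integral_const,
      smul_eq_mul]
    field_simp
  calc |(b - a)⁻¹ * (∫ y in a..b, g y) - c|
      = |b - a|⁻¹ * ‖∫ y in a..b, (g y - c)‖ := by rw [hsub, abs_mul, abs_inv, Real.norm_eq_abs]
    _ ≤ |b - a|⁻¹ * (M * |b - a|) := by
        gcongr
        exact intervalIntegral.norm_integral_le_of_norm_le_const hM
    _ = M := by field_simp

lemma floor_cell_bounds {N : ℕ} (hN : 0 < N) {x : ℝ} (hx : x ∈ Set.Ico (0:ℝ) 1) :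
    0 ≤ (⌊(N : ℝ) * x⌋ : ℝ) / N ∧ (⌊(N : ℝ) * x⌋ : ℝ) / N ≤ x ∧
      x < ((⌊(N : ℝ) * x⌋ : ℝ) + 1) / N ∧ ((⌊(N : ℝ) * x⌋ : ℝ) + 1) / N ≤ 1 := by
  have hN' : (0:ℝ) < N := Nat.cast_pos.mpr hN
  have hfloor_lt : ⌊(N : ℝ) * x⌋ < N := Int.floor_lt.mpr (by push_cast; nlinarith [hx.1, hx.2])
  refine ⟨by positivity [Int.floor_nonneg.mpr (mul_nonneg hN'.le hx.1)], ?_, ?_, ?_⟩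
  · rw [div_le_iff₀ hN', mul_comm]; exact Int.floor_le _
  · rw [lt_div_iff₀ hN', mul_comm]; exact Int.lt_floor_add_one _
  · rw [div_le_one hN']; exact_mod_cast Int.add_one_le_iff.mpr hfloor_lt

lemma abs_Qavg_sub_le {C α : ℝ} (hC : 0 ≤ C) (hα : 0 < α) {g : ℝ → ℝ}
    (hg : ∀ x ∈ Set.Icc (0:ℝ) 1, ∀ y ∈ Set.Icc (0:ℝ) 1, |g x - g y| ≤ C * |x - y| ^ α)
    {N : ℕ} (hN : 0 < N) {x : ℝ} (hx : x ∈ Set.Ico (0:ℝ) 1) :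
    |Qavg N g x - g x| ≤ C * (N : ℝ) ^ (-α) := by
  obtain ⟨ha0, hax, hxb, hb1⟩ := floor_cell_bounds hN hx
  set a : ℝ := (⌊(N : ℝ) * x⌋ : ℝ) / N
  set b : ℝ := ((⌊(N : ℝ) * x⌋ : ℝ) + 1) / N
  have hN' : (0:ℝ) < N := Nat.cast_pos.mpr hN
  have hba : b - a = (N : ℝ)⁻¹ := by simp only [a, b]; field_simp; ring
  have hcell : Set.Icc a b ⊆ Set.Icc 0 1 := Set.Icc_subset_Icc ha0 hb1
  have hint : IntervalIntegrable g volume a b :=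
    ((continuousOn_of_abs_sub_le_rpow hα hg).mono hcell).intervalIntegrable_of_Icc
      (hax.trans hxb.le)
  have hQ : Qavg N g x = (b - a)⁻¹ * ∫ y in a..b, g y := by rw [hba, inv_inv]; rfl
  rw [hQ]
  refine abs_inv_mul_integral_sub_le (hax.trans_lt hxb).ne hint fun y hy => ?_
  rw [Set.uIoc_of_le (hax.trans hxb.le)] at hy
  have hdist : |y - x| ≤ (N : ℝ)⁻¹ := by
    rw [← hba, abs_le]; constructor <;> linarith [hy.1, hy.2]
  calc |g y - g x| ≤ C * |y - x| ^ α :=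
        hg y (hcell (Set.Ioc_subset_Icc_self hy)) x ⟨hx.1, hx.2.le⟩
    _ ≤ C * ((N : ℝ)⁻¹) ^ α := by gcongr
    _ = C * (N : ℝ) ^ (-α) := by rw [Real.inv_rpow hN'.le, Real.rpow_neg hN'.le]

lemma lipschitzWith_inv_sq_add_sq {ε : ℝ} (hε : 0 < ε) :
    LipschitzWith (ε⁻¹ ^ 3).toNNReal (fun t : ℝ => (ε ^ 2 + t ^ 2)⁻¹) := by
  refine LipschitzWith.of_dist_le_mul fun s t => ?_
  rw [Real.dist_eq, Real.dist_eq, Real.coe_toNNReal _ (by positivity)]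
  have hs : 0 < ε ^ 2 + s ^ 2 := by positivity
  have ht : 0 < ε ^ 2 + t ^ 2 := by positivity
  -- from `2|s|ε ≤ ε² + s²` and `ε² ≤ ε² + t²`, and symmetrically in `s`, `t`
  have key : |s + t| * ε ^ 3 ≤ (ε ^ 2 + s ^ 2) * (ε ^ 2 + t ^ 2) := by
    nlinarith [abs_add_le s t, sq_nonneg (ε - |s|), sq_nonneg (ε - |t|), sq_abs s, sq_abs t,
      mul_nonneg (sq_nonneg s) (sq_nonneg t), abs_nonneg s, abs_nonneg t, pow_pos hε 3]
  have hdiff : (ε ^ 2 + s ^ 2)⁻¹ - (ε ^ 2 + t ^ 2)⁻¹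
      = (t - s) * (s + t) / ((ε ^ 2 + s ^ 2) * (ε ^ 2 + t ^ 2)) := by
    field_simp; ring
  rw [hdiff, abs_div, abs_mul, abs_sub_comm, abs_of_pos (mul_pos hs ht),
    div_le_iff₀ (mul_pos hs ht), inv_pow, inv_mul_eq_div, div_mul_eq_mul_div,
    le_div_iff₀ (by positivity), mul_assoc]
  gcongr

theorem statement12_general (ε : ℝ) (hε : 0 < ε) (α : ℝ) (hα : α ∈ Set.Ioc (0:ℝ) 1)
    (C : ℝ) (hC : 0 ≤ C)
    (v : ℝ → ℝ)
    (vn : ℕ → ℝ → ℝ)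
    (hvn : ∀ n : ℕ, ∀ x ∈ Set.Icc (0:ℝ) 1, ∀ y ∈ Set.Icc (0:ℝ) 1,
      |vn n x - vn n y| ≤ C * |x - y| ^ α)
    (hconv : TendstoUniformlyOn (fun n => vn n) v atTop (Set.Icc 0 1)) :
    TendstoUniformlyOn (fun n x => (ε ^ 2 + (Qavg (2 ^ n) (vn n) x) ^ 2)⁻¹)
      (fun x => (ε ^ 2 + v x ^ 2)⁻¹) atTop (Set.Ico 0 1) := by
  have hmesh : Tendsto (fun n : ℕ => C * ((2 ^ n : ℕ) : ℝ) ^ (-α)) atTop (𝓝 0) := by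
    simpa using ((tendsto_rpow_neg_atTop hα.1).comp
      (tendsto_pow_atTop_atTop_of_one_lt one_lt_two)).const_mul C
  have hQ : TendstoUniformlyOn (fun n => Qavg (2 ^ n) (vn n)) v atTop (Set.Ico 0 1) :=
    (hconv.mono Set.Ico_subset_Icc_self).of_dist_le hmesh <| Eventually.of_forall fun n x hx =>
      abs_Qavg_sub_le hC hα.1 (hvn n) (Nat.two_pow_pos n) hx
  exact (lipschitzWith_inv_sq_add_sq hε).uniformContinuous.comp_tendstoUniformlyOn hQ

/-- Let `ε > 0`, let `v` be continuous on `[0,1]`, and let each `v_n`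
be `α`-Hölder on `[0,1]` with a uniform constant `C`. If `v_n → v` uniformly on
`[0,1]`, then the multiplier functions `(ε² + (Q_{2^n} v_n)²)⁻¹` converge uniformly on
`[0,1)` to `(ε² + v²)⁻¹`. -/
theorem statement12 (ε : ℝ) (hε : 0 < ε) (α : ℝ) (hα : α ∈ Set.Ioc (0:ℝ) 1)
    (C : ℝ) (hC : 0 ≤ C)
    (v : ℝ → ℝ) (hv : ContinuousOn v (Set.Icc 0 1))
    (vn : ℕ → ℝ → ℝ)
    (hvn : ∀ n : ℕ, ∀ x ∈ Set.Icc (0:ℝ) 1, ∀ y ∈ Set.Icc (0:ℝ) 1,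
      |vn n x - vn n y| ≤ C * |x - y| ^ α)
    (hconv : TendstoUniformlyOn (fun n => vn n) v atTop (Set.Icc 0 1)) :
    TendstoUniformlyOn (fun n x => (ε ^ 2 + (Qavg (2 ^ n) (vn n) x) ^ 2)⁻¹)
      (fun x => (ε ^ 2 + v x ^ 2)⁻¹) atTop (Set.Ico 0 1) :=
  statement12_general ε hε α hα C hC v vn hvn hconv
end

section
/- Let E and H be complex Hilbert spaces and ι : E → H a continuous linear map. Let δ > 0, u ∈ E with ‖ι u‖_H ≤ ‖u‖_E, let f be a continuous linear functional on E with dual norm ‖f‖, and let z ∈ ℂ with Re z < δ/2. Assume the coercive identity δ ‖u‖²_E ≤ (Re z) · ‖ι u‖²_H + Re(f(u)). Then (δ − Re z) · ‖ι u‖²_H ≤ (2/δ) ‖f‖². -/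
/-!
Since `‖ι u‖ ≤ ‖u‖` and `Re z < δ/2`, the term `Re z · ‖ι u‖²` absorbs at most half of
`δ‖u‖²`, so the coercive inequality gives `(δ/2)‖u‖² ≤ ‖f‖‖u‖`, i.e. `‖u‖ ≤ (2/δ)‖f‖`.
Feeding this back, `(δ − Re z)‖ι u‖² ≤ δ‖u‖² − Re z ‖ι u‖² ≤ ‖f‖‖u‖ ≤ (2/δ)‖f‖²`.
-/

section CoerciveScalar

variable {δ a m n F : ℝ}

theorem half_mul_sq_le_of_coercive (hδ : 0 ≤ δ) (hmn : m ≤ n) (hm : 0 ≤ m) (ha : a < δ / 2)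
    (hcoer : δ * n ^ 2 ≤ a * m ^ 2 + F * n) : δ / 2 * n ^ 2 ≤ F * n := by
  have hmn2 : m ^ 2 ≤ n ^ 2 := pow_le_pow_left₀ hm hmn 2
  have absorb : a * m ^ 2 ≤ δ / 2 * n ^ 2 := by
    rcases le_or_gt a 0 with h | h
    · nlinarith [mul_nonneg hδ (sq_nonneg n)]
    · nlinarith
  linarith

theorem le_two_div_mul_of_coercive (hδ : 0 < δ) (hF : 0 ≤ F) (hmn : m ≤ n) (hm : 0 ≤ m)
    (ha : a < δ / 2) (hcoer : δ * n ^ 2 ≤ a * m ^ 2 + F * n) : n ≤ 2 / δ * F := by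
  have half := half_mul_sq_le_of_coercive hδ.le hmn hm ha hcoer
  have hn : 0 ≤ n := hm.trans hmn
  rw [div_mul_eq_mul_div, le_div_iff₀ hδ]
  rcases hn.eq_or_lt with rfl | hn
  · linarith
  · nlinarith

theorem sub_mul_sq_le_of_coercive (hδ : 0 < δ) (hF : 0 ≤ F) (hmn : m ≤ n) (hm : 0 ≤ m)
    (ha : a < δ / 2) (hcoer : δ * n ^ 2 ≤ a * m ^ 2 + F * n) :
    (δ - a) * m ^ 2 ≤ 2 / δ * F ^ 2 := by
  have hmn2 : m ^ 2 ≤ n ^ 2 := pow_le_pow_left₀ hm hmn 2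
  calc (δ - a) * m ^ 2 ≤ δ * n ^ 2 - a * m ^ 2 := by nlinarith
    _ ≤ F * n := by linarith
    _ ≤ F * (2 / δ * F) :=
        mul_le_mul_of_nonneg_left (le_two_div_mul_of_coercive hδ hF hmn hm ha hcoer) hF
    _ = 2 / δ * F ^ 2 := by ring

end CoerciveScalar

theorem statement15_general
    {E : Type*} [NormedAddCommGroup E] [InnerProductSpace ℂ E]
    {H : Type*} [NormedAddCommGroup H] [InnerProductSpace ℂ H]
    (ι : E →L[ℂ] H) (δ : ℝ) (hδ : 0 < δ) (u : E) (hι : ‖ι u‖ ≤ ‖u‖)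
    (f : E →L[ℂ] ℂ) (z : ℂ) (hz : z.re < δ / 2)
    (hcoer : δ * ‖u‖ ^ 2 ≤ z.re * ‖ι u‖ ^ 2 + (f u).re) :
    (δ - z.re) * ‖ι u‖ ^ 2 ≤ (2 / δ) * ‖f‖ ^ 2 := by
  have hfu : (f u).re ≤ ‖f‖ * ‖u‖ := (Complex.re_le_norm _).trans (f.le_opNorm u)
  exact sub_mul_sq_le_of_coercive hδ (norm_nonneg f) hι (norm_nonneg _) hz
    (hcoer.trans (by linarith))

/-- Resolvent estimate `‖(z − B_v)⁻¹‖_{H⁻¹ → L²} ≲ |z|^{−1/2}`: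
let `E, H` be complex Hilbert spaces, `ι : E → H` continuous linear, `δ > 0`,
`u ∈ E` with `‖ι u‖ ≤ ‖u‖`, `f` a continuous linear functional on `E`, and `z ∈ ℂ`
with `Re z < δ/2`. If `δ‖u‖² ≤ Re z · ‖ι u‖² + Re (f u)`, then
`(δ − Re z) ‖ι u‖² ≤ (2/δ) ‖f‖²`. -/
theorem statement15
    {E : Type*} [NormedAddCommGroup E] [InnerProductSpace ℂ E] [CompleteSpace E]
    {H : Type*} [NormedAddCommGroup H] [InnerProductSpace ℂ H] [CompleteSpace H]
    (ι : E →L[ℂ] H) (δ : ℝ) (hδ : 0 < δ) (u : E) (hι : ‖ι u‖ ≤ ‖u‖)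
    (f : E →L[ℂ] ℂ) (z : ℂ) (hz : z.re < δ / 2)
    (hcoer : δ * ‖u‖ ^ 2 ≤ z.re * ‖ι u‖ ^ 2 + (f u).re) :
    (δ - z.re) * ‖ι u‖ ^ 2 ≤ (2 / δ) * ‖f‖ ^ 2 :=
  statement15_general ι δ hδ u hι f z hz hcoer
end
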